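/- arXiv:2605.24835 — 4 statements merged into one kernel-verified Lean document; each statement's English description precedes it below -/
import Mathlib

section
/- Let F be a field of characteristic zero, γ ∈ F^×, and f(t) = γ(t - a_1)···(t - a_n) ∈ F[t] for some a_1, ..., a_n ∈ F (n ≥ 0). Then there exists s ∈ F(t)^× with 1/f = s'/s (where s' = ds/dt) if and only if n > 0, the elements a_1, ..., a_n are pairwise distinct, and for each i = 1, ..., n the element γ^{-1} · ∏_{j ≠ i} (a_i - a_j)^{-1} is an integer (i.e., lies in the image of ℤ in F). -/
noncomputable section

open MvPolynomial

/-- The rational function field `k(x,y)`, realized as the fraction field of `k[x,y]`. -/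
abbrev Kxy (k : Type) [Field k] : Type := FractionRing (MvPolynomial (Fin 2) k)

variable (k : Type) [Field k]

/-- The element `x` of `k(x,y)`. -/
def Xe : Kxy k := algebraMap (MvPolynomial (Fin 2) k) (Kxy k) (X 0)

/-- The element `y` of `k(x,y)`. -/
def Ye : Kxy k := algebraMap (MvPolynomial (Fin 2) k) (Kxy k) (X 1)

variable {k}

/-- `D` is the partial derivative `∂/∂x` on `k(x,y)` (the unique extension to `k(x,y)` of the
partial derivative `∂/∂x` on `k[x,y]`, being a derivation killing `y`). -/
def IsDx (D : Derivation k (Kxy k) (Kxy k)) : Prop :=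
  D (Xe k) = 1 ∧ D (Ye k) = 0

/-- `D` is the partial derivative `∂/∂y` on `k(x,y)`. -/
def IsDy (D : Derivation k (Kxy k) (Kxy k)) : Prop :=
  D (Xe k) = 0 ∧ D (Ye k) = 1

/-- The Poisson bracket of `K{f}`: `{g,h} = (g_x h_y - g_y h_x) * f`. -/
def pbr (Dx Dy : Derivation k (Kxy k) (Kxy k)) (f g h : Kxy k) : Kxy k :=
  (Dx g * Dy h - Dy g * Dx h) * f

/-- A Poisson bracket on a commutative `k`-algebra `A`: a `k`-bilinear antisymmetric map which is
a derivation in each argument and satisfies the Jacobi identity.  (Bilinearity and the Leibniz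
rule in the first argument follow from antisymmetry.) -/
structure PoissonBracket (k A : Type) [CommRing k] [CommRing A] [Algebra k A] where
  br : A → A → A
  add_left : ∀ a b c : A, br (a + b) c = br a c + br b c
  smul_left : ∀ (r : k) (a b : A), br (r • a) b = r • br a b
  antisymm : ∀ a b : A, br a b = - br b a
  leibniz : ∀ a b c : A, br a (b * c) = br a b * c + b * br a c
  jacobi : ∀ a b c : A, br (br a b) c + br (br c a) b + br (br b c) a = 0

/-- `φ` is a morphism of Poisson fields from `(k(x,y), B₁)` to `(k(x,y), B₂)`. -/
def IsPoissonHom (B₁ B₂ : Kxy k → Kxy k → Kxy k) (φ : Kxy k →ₐ[k] Kxy k) : Prop :=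
  ∀ a b : Kxy k, φ (B₁ a b) = B₂ (φ a) (φ b)

/-- The Poisson fields `(k(x,y), B₁)` and `(k(x,y), B₂)` are Poisson-isomorphic. -/
def PoissonIso (B₁ B₂ : Kxy k → Kxy k → Kxy k) : Prop :=
  ∃ φ : Kxy k ≃ₐ[k] Kxy k, ∀ a b : Kxy k, φ (B₁ a b) = B₂ (φ a) (φ b)

/-- A discrete valuation on a field extension `K` of `k`, trivial on `k`. -/
structure DVal (k K : Type) [Field k] [Field K] [Algebra k K] where
  v : K → WithTop ℤ
  top_iff : ∀ a : K, v a = ⊤ ↔ a = 0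
  v_mul : ∀ a b : K, v (a * b) = v a + v b
  min_le : ∀ a b : K, min (v a) (v b) ≤ v (a + b)
  const : ∀ c : k, c ≠ 0 → v (algebraMap k K c) = 0

variable {K : Type} [Field K] [Algebra k K]

/-- `ν` is a `w`-valuation for the Poisson bracket `B`:
`ν({a,b}) ≥ ν(a) + ν(b) - w` for all `a b`. -/
def DVal.IsWVal (ν : DVal k K) (B : K → K → K) (w : ℤ) : Prop :=
  ∀ a b : K, ν.v a + ν.v b ≤ ν.v (B a b) + (w : WithTop ℤ)

/-- `ν` is a nontrivial valuation. -/
def DVal.Nontriv (ν : DVal k K) : Prop := ∃ a : K, a ≠ 0 ∧ ν.v a ≠ 0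

/-- `ν` is a non-classical `w`-valuation for `B`: it is a `w`-valuation, and there are nonzero
`a, b` with `ν({a,b}) ≤ ν(a) + ν(b) - w`. -/
def DVal.IsNonClassicalWVal (ν : DVal k K) (B : K → K → K) (w : ℤ) : Prop :=
  ν.IsWVal B w ∧ ∃ a b : K, a ≠ 0 ∧ b ≠ 0 ∧ ν.v (B a b) + (w : WithTop ℤ) ≤ ν.v a + ν.v b

open scoped Classical in
/-- The invariant `^wΓ_v(K)` : elements whose value is `≥ v` under every nontrivial
`w`-valuation; all of `K` if there is no nontrivial `w`-valuation. -/
def Gamma (k K : Type) [Field k] [Field K] [Algebra k K]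
    (B : K → K → K) (w v : ℤ) : Set K :=
  if ∃ ν : DVal k K, ν.Nontriv ∧ ν.IsWVal B w then
    {a : K | ∀ ν : DVal k K, ν.Nontriv → ν.IsWVal B w → (v : WithTop ℤ) ≤ ν.v a}
  else Set.univ

/-- The set of integers `w` such that there is a non-classical `w`-valuation `ν` on `K` with
`F^ν_0(K) ∩ ^nΓ_0(K) = k`.  The `n`-valuation height `vht_n(K)` is `2` plus the infimum of
this set. -/
def vhtSet (k K : Type) [Field k] [Field K] [Algebra k K]
    (B : K → K → K) (n : ℤ) : Set ℤ :=
  {w : ℤ | ∃ ν : DVal k K, ν.IsNonClassicalWVal B w ∧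
    ({a : K | (0 : WithTop ℤ) ≤ ν.v a} ∩ Gamma k K B n 0 = Set.range (algebraMap k K))}

/-- The set of total degrees of polynomial flags `g ∈ k[x,y]` with `K{f} ≅ K{g}`.
The flag height `fht(K{f})` is the infimum of this set (in `ℕ∞`, so `⊤` if empty). -/
def fhtSet (Dx Dy : Derivation k (Kxy k) (Kxy k)) (f : Kxy k) : Set ℕ∞ :=
  {d : ℕ∞ | ∃ g : MvPolynomial (Fin 2) k, (g.totalDegree : ℕ∞) = d ∧
    PoissonIso (pbr Dx Dy f) (pbr Dx Dy (algebraMap (MvPolynomial (Fin 2) k) (Kxy k) g))}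

/-- `K{f}` is height cohereditary: `fht(K{f}) ≤ fht(K{g})` whenever there is an (automatically
injective) Poisson morphism `K{f} → K{g}`. -/
def HeightCohereditary (Dx Dy : Derivation k (Kxy k) (Kxy k)) (f : Kxy k) : Prop :=
  ∀ g : Kxy k,
    (∃ φ : Kxy k →ₐ[k] Kxy k, IsPoissonHom (pbr Dx Dy f) (pbr Dx Dy g) φ) →
    sInf (fhtSet Dx Dy f) ≤ sInf (fhtSet Dx Dy g)



namespace Statement3Aux

open Polynomial Finset
open scoped Classical

set_option linter.unusedSectionVars false

variable {F : Type} [Field F] [CharZero F]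

lemma Dmap (D : Derivation F (FractionRing (Polynomial F)) (FractionRing (Polynomial F)))
    (hD : D (algebraMap (Polynomial F) (FractionRing (Polynomial F)) Polynomial.X) = 1)
    (p : Polynomial F) :
    D (algebraMap (Polynomial F) (FractionRing (Polynomial F)) p)
      = algebraMap (Polynomial F) (FractionRing (Polynomial F)) (derivative p) := by
  induction p using Polynomial.induction_on with
  | C a =>
      rw [show (Polynomial.C a : Polynomial F) = algebraMap F (Polynomial F) a from rfl,
        ← IsScalarTower.algebraMap_apply]
      simp
  | add p q hp hq => simp [hp, hq]
  | monomial m c ih =>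
      have : (Polynomial.C c * Polynomial.X ^ (m + 1) : Polynomial F) = (Polynomial.C c * Polynomial.X ^ m) * Polynomial.X := by ring
      rw [this, map_mul, Derivation.leibniz, ih, hD]
      rw [show derivative (Polynomial.C c * Polynomial.X ^ m * Polynomial.X) = derivative (Polynomial.C c * Polynomial.X ^ m) * Polynomial.X + (Polynomial.C c * Polynomial.X ^ m) * 1 by
        rw [derivative_mul, derivative_X]]
      simp only [map_add, map_mul, map_one, smul_eq_mul]
      ring

lemma logd_zpow {E : Type} [Field E] [Algebra F E] (D : Derivation F E E) (x : E) (hx : x ≠ 0) (z : ℤ) :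
    D (x ^ z) / x ^ z = (z : E) * (D x / x) := by
  rw [Derivation.leibniz_zpow, zsmul_eq_mul, smul_eq_mul]
  rw [div_eq_iff (zpow_ne_zero z hx)]
  field_simp
  rw [show (z:E) * x ^ (z - 1) * D x * x = (z:E) * (x ^ (z-1) * x) * D x by ring,
    ← zpow_add_one₀ hx (z-1)]
  ring_nf

lemma logd_prod {E : Type} [Field E] [Algebra F E] (D : Derivation F E E) {ι : Type*} (s : Finset ι) (x : ι → E)
    (hx : ∀ i, x i ≠ 0) (z : ι → ℤ) :
    D (∏ i ∈ s, x i ^ z i) / (∏ i ∈ s, x i ^ z i)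
      = ∑ i ∈ s, (z i : E) * (D (x i) / x i) := by
  classical
  induction s using Finset.cons_induction with
  | empty => simp
  | cons i s hi ih =>
      rw [Finset.prod_cons, Finset.sum_cons, ← ih]
      have h1 : x i ^ z i ≠ 0 := zpow_ne_zero _ (hx i)
      have h2 : (∏ j ∈ s, x j ^ z j) ≠ 0 := Finset.prod_ne_zero_iff.2 fun j _ => zpow_ne_zero _ (hx j)
      rw [Derivation.leibniz, smul_eq_mul, smul_eq_mul, ← logd_zpow D (x i) (hx i)]
      field_simp
      ring

lemma partial_frac (γ : F) (hγ : γ ≠ 0) (n : ℕ) (hn : 0 < n) (a : Fin n → F)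
    (ha : Function.Injective a) (z : Fin n → ℤ)
    (hz : ∀ i, γ⁻¹ * (∏ j ∈ Finset.univ.erase i, (a i - a j))⁻¹ = ((z i : ℤ) : F)) :
    (∑ i : Fin n, Polynomial.C ((z i : F) * γ) * ∏ j ∈ Finset.univ.erase i, (Polynomial.X - Polynomial.C (a j)))
      = (1 : Polynomial F) := by
  set h : Polynomial F :=
    ∑ i : Fin n, Polynomial.C ((z i : F) * γ) * ∏ j ∈ Finset.univ.erase i, (Polynomial.X - Polynomial.C (a j)) with hh
  have key : h - 1 = 0 := by
    apply Polynomial.eq_zero_of_natDegree_lt_card_of_eval_eq_zero _ ha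
    · intro i
      have heval : h.eval (a i) = 1 := by
        rw [hh, Polynomial.eval_finset_sum]
        rw [Finset.sum_eq_single i]
        · have hprod : ∀ j ∈ Finset.univ.erase i, a i - a j ≠ 0 := by
            intro j hj
            have := Finset.ne_of_mem_erase hj
            exact sub_ne_zero.2 fun hc => this (ha hc.symm)
          have hP : (∏ j ∈ Finset.univ.erase i, (a i - a j)) ≠ 0 :=
            Finset.prod_ne_zero_iff.2 hprod
          have := hz i
          simp only [Polynomial.eval_mul, Polynomial.eval_C, Polynomial.eval_prod, Polynomial.eval_sub, Polynomial.eval_X]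
          field_simp at this ⊢
          linear_combination -this
        · intro k _ hk
          have hik : i ∈ Finset.univ.erase k := Finset.mem_erase.2 ⟨fun hik => hk hik.symm, Finset.mem_univ i⟩
          simp only [Polynomial.eval_mul, Polynomial.eval_prod, Polynomial.eval_sub, Polynomial.eval_X, Polynomial.eval_C]
          rw [Finset.prod_eq_zero hik (by simp)]
          ring
        · simp
      simp [heval]
    · rw [Fintype.card_fin]
      have hd : h.natDegree ≤ n - 1 := by
        apply Polynomial.natDegree_sum_le_of_forall_le
        intro i _
        calc (Polynomial.C ((z i : F) * γ) * ∏ j ∈ Finset.univ.erase i, (Polynomial.X - Polynomial.C (a j))).natDegree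
            ≤ (Polynomial.C ((z i : F) * γ)).natDegree + (∏ j ∈ Finset.univ.erase i, (Polynomial.X - Polynomial.C (a j))).natDegree :=
              natDegree_mul_le
          _ ≤ 0 + ∑ j ∈ Finset.univ.erase i, (Polynomial.X - Polynomial.C (a j)).natDegree := by
              gcongr
              · exact le_of_eq (natDegree_C _)
              · exact natDegree_prod_le _ _
          _ ≤ ∑ j ∈ Finset.univ.erase i, 1 := by
              simp only [zero_add]
              exact Finset.sum_le_sum fun j _ => le_of_eq (natDegree_X_sub_C _)
          _ = n - 1 := by simp [Finset.card_erase_of_mem]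
      calc (h - 1).natDegree ≤ max h.natDegree (1 : Polynomial F).natDegree := natDegree_sub_le _ _
        _ ≤ n - 1 := by simp [hd]
        _ < n := by omega
  have := sub_eq_zero.mp key
  exact this

lemma conv_dir (D : Derivation F (FractionRing (Polynomial F)) (FractionRing (Polynomial F)))
    (hD : D (algebraMap (Polynomial F) (FractionRing (Polynomial F)) Polynomial.X) = 1)
    (γ : F) (hγ : γ ≠ 0) (n : ℕ) (a : Fin n → F) (hn : 0 < n) (ha : Function.Injective a)
    (z : Fin n → ℤ)
    (hz : ∀ i, γ⁻¹ * (∏ j ∈ Finset.univ.erase i, (a i - a j))⁻¹ = ((z i : ℤ) : F)) :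
    ∃ s : FractionRing (Polynomial F), s ≠ 0 ∧
        (algebraMap (Polynomial F) (FractionRing (Polynomial F))
            (Polynomial.C γ * ∏ i : Fin n, (Polynomial.X - Polynomial.C (a i))))⁻¹
          = D s / s := by
  set K := FractionRing (Polynomial F)
  set ι := algebraMap (Polynomial F) K with hι
  have hinj : Function.Injective ι := IsFractionRing.injective _ _
  have hmapne : ∀ p : Polynomial F, p ≠ 0 → ι p ≠ 0 := fun p hp => by
    simpa using (map_ne_zero_iff ι hinj).2 hp
  have hti : ∀ i : Fin n, ι (Polynomial.X - Polynomial.C (a i)) ≠ 0 := fun i => hmapne _ (X_sub_C_ne_zero _)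
  refine ⟨∏ i : Fin n, (ι (Polynomial.X - Polynomial.C (a i))) ^ (z i), ?_, ?_⟩
  · exact Finset.prod_ne_zero_iff.2 fun i _ => zpow_ne_zero _ (hti i)
  · rw [logd_prod D Finset.univ _ hti z]
    have hDt : ∀ i : Fin n, D (ι (Polynomial.X - Polynomial.C (a i))) = 1 := by
      intro i
      rw [Dmap D hD]
      simp
    have hsum : ∀ i : Fin n, (z i : K) * (D (ι (Polynomial.X - Polynomial.C (a i))) / ι (Polynomial.X - Polynomial.C (a i)))
        = (z i : K) * (ι (Polynomial.X - Polynomial.C (a i)))⁻¹ := by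
      intro i; rw [hDt i, one_div]
    simp only [hsum]
    set f : Polynomial F := Polynomial.C γ * ∏ i : Fin n, (Polynomial.X - Polynomial.C (a i)) with hf
    have hfne : ι f ≠ 0 := hmapne _ (by
      apply mul_ne_zero (by simpa using hγ)
      exact Finset.prod_ne_zero_iff.2 fun i _ => X_sub_C_ne_zero _)
    refine inv_eq_of_mul_eq_one_right ?_
    rw [Finset.mul_sum]
    have hterm : ∀ i : Fin n, ι f * ((z i : K) * (ι (Polynomial.X - Polynomial.C (a i)))⁻¹)
        = ι (Polynomial.C ((z i : F) * γ) * ∏ j ∈ Finset.univ.erase i, (Polynomial.X - Polynomial.C (a j))) := by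
      intro i
      have hfact : f = (Polynomial.X - Polynomial.C (a i)) * (Polynomial.C γ * ∏ j ∈ Finset.univ.erase i, (Polynomial.X - Polynomial.C (a j))) := by
        rw [hf, ← Finset.mul_prod_erase _ _ (Finset.mem_univ i)]; ring
      have hzi : ((z i : ℤ) : K) = ι (Polynomial.C ((z i : ℤ) : F)) := by
        rw [show (Polynomial.C ((z i : ℤ) : F)) = ((z i : ℤ) : Polynomial F) by push_cast; rfl, map_intCast]
      have ht := hti i
      rw [hzi, hfact, map_mul]
      rw [show ι (Polynomial.X - Polynomial.C (a i)) * ι (Polynomial.C γ * ∏ j ∈ Finset.univ.erase i, (Polynomial.X - Polynomial.C (a j))) *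
          (ι (Polynomial.C ((z i : ℤ) : F)) * (ι (Polynomial.X - Polynomial.C (a i)))⁻¹)
          = (ι (Polynomial.X - Polynomial.C (a i)) * (ι (Polynomial.X - Polynomial.C (a i)))⁻¹) *
            (ι (Polynomial.C ((z i : ℤ) : F)) * ι (Polynomial.C γ * ∏ j ∈ Finset.univ.erase i, (Polynomial.X - Polynomial.C (a j)))) by ring,
        mul_inv_cancel₀ ht, one_mul, ← map_mul]
      congr 1
      rw [Polynomial.C_mul]
      ring
    calc ∑ i : Fin n, ι f * ((z i : K) * (ι (Polynomial.X - Polynomial.C (a i)))⁻¹)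
        = ∑ i : Fin n, ι (Polynomial.C ((z i : F) * γ) * ∏ j ∈ Finset.univ.erase i, (Polynomial.X - Polynomial.C (a j))) := by
          exact Finset.sum_congr rfl fun i _ => hterm i
      _ = ι (∑ i : Fin n, Polynomial.C ((z i : F) * γ) * ∏ j ∈ Finset.univ.erase i, (Polynomial.X - Polynomial.C (a j))) :=
          (map_sum ι _ _).symm
      _ = 1 := by rw [partial_frac γ hγ n hn a ha z hz, map_one]

lemma tpow_deriv (α : F) (u : ℕ) (P : Polynomial F) :
    (Polynomial.X - Polynomial.C α) * derivative ((Polynomial.X - Polynomial.C α) ^ u * P)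
      = Polynomial.C (u : F) * ((Polynomial.X - Polynomial.C α) ^ u * P) + (Polynomial.X - Polynomial.C α) ^ (u + 1) * derivative P := by
  rw [derivative_mul, derivative_pow]
  simp only [derivative_sub, derivative_X, derivative_C, sub_zero, mul_one]
  cases u with
  | zero => simp
  | succ k =>
      simp only [Nat.add_sub_cancel]
      push_cast
      ring

-- degree bound for the "wronskian"

lemma deg_r_lt {p q : Polynomial F} (hp : p ≠ 0) (hq : q ≠ 0)
    (h : p.natDegree + q.natDegree ≠ 0) :
    (derivative p * q - p * derivative q).natDegree < p.natDegree + q.natDegree := by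
  have h1 : (derivative p * q).natDegree < p.natDegree + q.natDegree := by
    rcases Nat.eq_zero_or_pos p.natDegree with h0 | h0
    · obtain ⟨c, rfl⟩ := Polynomial.natDegree_eq_zero.1 h0
      simp only [derivative_C, zero_mul, natDegree_zero]
      omega
    · calc (derivative p * q).natDegree ≤ (derivative p).natDegree + q.natDegree :=
            natDegree_mul_le
        _ ≤ (p.natDegree - 1) + q.natDegree := by
            have := Polynomial.natDegree_derivative_le p
            omega
        _ < p.natDegree + q.natDegree := by omega
  have h2 : (p * derivative q).natDegree < p.natDegree + q.natDegree := by
    rcases Nat.eq_zero_or_pos q.natDegree with h0 | h0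
    · obtain ⟨c, rfl⟩ := Polynomial.natDegree_eq_zero.1 h0
      simp only [derivative_C, mul_zero, natDegree_zero]
      omega
    · calc (p * derivative q).natDegree ≤ p.natDegree + (derivative q).natDegree :=
            natDegree_mul_le
        _ ≤ p.natDegree + (q.natDegree - 1) := by
            have := Polynomial.natDegree_derivative_le q
            omega
        _ < p.natDegree + q.natDegree := by omega
  calc (derivative p * q - p * derivative q).natDegree
      ≤ max (derivative p * q).natDegree (p * derivative q).natDegree := natDegree_sub_le _ _
    _ < p.natDegree + q.natDegree := by omega

lemma local_analysis (γ : F) (hγ : γ ≠ 0) (n : ℕ) (a : Fin n → F)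
    {p q : Polynomial F} (hp : p ≠ 0) (hq : q ≠ 0)
    (key : p * q = (Polynomial.C γ * ∏ j : Fin n, (Polynomial.X - Polynomial.C (a j))) * (derivative p * q - p * derivative q))
    (i : Fin n) :
    (Finset.univ.filter (fun j => a j = a i)).card = 1 ∧
    ∃ z : ℤ, γ⁻¹ * (∏ j ∈ Finset.univ.filter (fun j => a j ≠ a i), (a i - a j))⁻¹ = (z : F) := by
  classical
  set α := a i with hα
  set t : Polynomial F := Polynomial.X - Polynomial.C α with ht
  have htne : t ≠ 0 := X_sub_C_ne_zero α
  set e := (Finset.univ.filter (fun j => a j = a i)).card with he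
  set m : Polynomial F := ∏ j ∈ Finset.univ.filter (fun j => ¬ (a j = a i)), (Polynomial.X - Polynomial.C (a j))
    with hm
  -- factor f
  have hsplit : (∏ j : Fin n, (Polynomial.X - Polynomial.C (a j))) = t ^ e * m := by
    rw [← Finset.prod_filter_mul_prod_filter_not Finset.univ (fun j => a j = a i)]
    congr 1
    calc ∏ j ∈ Finset.univ.filter (fun j => a j = a i), (Polynomial.X - Polynomial.C (a j))
        = ∏ _j ∈ Finset.univ.filter (fun j => a j = a i), t := Finset.prod_congr rfl (fun j hj => by
            rw [Finset.mem_filter] at hj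
            rw [ht, hj.2, hα])
      _ = t ^ e := by rw [Finset.prod_const, he]
  set g : Polynomial F := Polynomial.C γ * m with hg
  have hgα : g.eval α ≠ 0 := by
    rw [hg, hm, Polynomial.eval_mul, Polynomial.eval_C, Polynomial.eval_prod]
    apply mul_ne_zero hγ
    apply Finset.prod_ne_zero_iff.2
    intro j hj
    rw [Finset.mem_filter] at hj
    simp only [Polynomial.eval_sub, Polynomial.eval_X, Polynomial.eval_C]
    exact sub_ne_zero.2 fun hc => hj.2 hc.symm
  have he1 : 1 ≤ e := by
    rw [he]
    refine Finset.card_pos.2 ⟨i, ?_⟩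
    simp
  obtain ⟨e', he'⟩ : ∃ e', e = e' + 1 := ⟨e - 1, by omega⟩
  -- decompose p and q
  obtain ⟨P, hP, hPnd⟩ := p.exists_eq_pow_rootMultiplicity_mul_and_not_dvd hp α
  obtain ⟨Q, hQ, hQnd⟩ := q.exists_eq_pow_rootMultiplicity_mul_and_not_dvd hq α
  set u := rootMultiplicity α p with hu
  set v := rootMultiplicity α q with hv
  have hPα : P.eval α ≠ 0 := fun h => hPnd (dvd_iff_isRoot.2 h)
  have hQα : Q.eval α ≠ 0 := fun h => hQnd (dvd_iff_isRoot.2 h)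
  set S : Polynomial F := derivative P * Q - P * derivative Q with hS
  -- the rewritten wronskian
  have hr : t * (derivative p * q - p * derivative q)
      = t ^ (u + v) * ((Polynomial.C (u : F) - Polynomial.C (v : F)) * (P * Q) + t * S) := by
    have h1 := tpow_deriv α u P
    have h2 := tpow_deriv α v Q
    calc t * (derivative p * q - p * derivative q)
        = (t * derivative p) * q - p * (t * derivative q) := by ring
      _ = (t * derivative (t ^ u * P)) * (t ^ v * Q)
          - (t ^ u * P) * (t * derivative (t ^ v * Q)) := by rw [← hP, ← hQ]
      _ = (Polynomial.C (u : F) * (t ^ u * P) + t ^ (u + 1) * derivative P) * (t ^ v * Q)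
          - (t ^ u * P) * (Polynomial.C (v : F) * (t ^ v * Q) + t ^ (v + 1) * derivative Q) := by
            rw [h1, h2]
      _ = t ^ (u + v) * ((Polynomial.C (u : F) - Polynomial.C (v : F)) * (P * Q) + t * S) := by
            rw [hS, pow_add]; ring
  -- main cancelled identity
  have hmain : P * Q = t ^ e' * g * ((Polynomial.C (u : F) - Polynomial.C (v : F)) * (P * Q) + t * S) := by
    have hkey2 : t ^ (u + v + 1) * (P * Q)
        = t ^ (u + v + 1) * (t ^ e' * g * ((Polynomial.C (u : F) - Polynomial.C (v : F)) * (P * Q) + t * S)) := by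
      have := congrArg (fun x => t * x) key
      calc t ^ (u + v + 1) * (P * Q) = t * (p * q) := by rw [hP, hQ, pow_add]; ring
        _ = t * ((Polynomial.C γ * ∏ j : Fin n, (Polynomial.X - Polynomial.C (a j))) * (derivative p * q - p * derivative q)) :=
            this
        _ = (t ^ e * (Polynomial.C γ * m)) * (t * (derivative p * q - p * derivative q)) := by
            rw [hsplit]; ring
        _ = (t ^ (e' + 1) * g) * (t ^ (u + v) * ((Polynomial.C (u : F) - Polynomial.C (v : F)) * (P * Q) + t * S)) := by
            rw [hr, ← he', hg]
        _ = t ^ (u + v + 1) * (t ^ e' * g * ((Polynomial.C (u : F) - Polynomial.C (v : F)) * (P * Q) + t * S)) := by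
            rw [pow_add, pow_add, pow_add]; ring
    exact mul_left_cancel₀ (pow_ne_zero _ htne) hkey2
  -- evaluate at α
  have hteval : t.eval α = 0 := by simp [ht]
  have he'0 : e' = 0 := by
    by_contra h
    have := congrArg (fun r => r.eval α) hmain
    simp only [Polynomial.eval_mul, Polynomial.eval_add, Polynomial.eval_pow, hteval] at this
    rw [zero_pow h] at this
    simp at this
    tauto
  have hres : (1 : F) = g.eval α * ((u : F) - (v : F)) := by
    have := congrArg (fun r => r.eval α) hmain
    rw [he'0] at this
    simp only [pow_zero, one_mul, Polynomial.eval_mul, Polynomial.eval_add, Polynomial.eval_sub, Polynomial.eval_C, hteval, zero_mul,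
      add_zero] at this
    have hPQ : P.eval α * Q.eval α ≠ 0 := mul_ne_zero hPα hQα
    have h2 := mul_left_cancel₀ hPQ (show (P.eval α * Q.eval α) * 1
        = (P.eval α * Q.eval α) * (g.eval α * ((u : F) - (v : F))) by linear_combination this)
    simpa using h2
  -- conclude
  have hgev : g.eval α = γ * ∏ j ∈ Finset.univ.filter (fun j => ¬ (a j = a i)), (α - a j) := by
    rw [hg, hm, Polynomial.eval_mul, Polynomial.eval_C, Polynomial.eval_prod]
    simp
  constructor
  · have h1 : e = 1 := by omega
    rw [he] at h1
    exact h1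
  · refine ⟨(u : ℤ) - (v : ℤ), ?_⟩
    rw [hgev] at hres
    push_cast
    rw [← mul_inv]
    exact inv_eq_of_mul_eq_one_right (by linear_combination -hres)

lemma fwd_dir (D : Derivation F (FractionRing (Polynomial F)) (FractionRing (Polynomial F)))
    (hD : D (algebraMap (Polynomial F) (FractionRing (Polynomial F)) Polynomial.X) = 1)
    (γ : F) (hγ : γ ≠ 0) (n : ℕ) (a : Fin n → F)
    (s : FractionRing (Polynomial F)) (hs : s ≠ 0)
    (heq : (algebraMap (Polynomial F) (FractionRing (Polynomial F))
            (Polynomial.C γ * ∏ i : Fin n, (Polynomial.X - Polynomial.C (a i))))⁻¹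
          = D s / s) :
    0 < n ∧ Function.Injective a ∧
      ∀ i : Fin n, ∃ z : ℤ,
        γ⁻¹ * (∏ j ∈ Finset.univ.erase i, (a i - a j))⁻¹ = (z : F) := by
  set ι := algebraMap (Polynomial F) (FractionRing (Polynomial F)) with hι
  have hinj : Function.Injective ι := IsFractionRing.injective _ _
  set f : Polynomial F := Polynomial.C γ * ∏ i : Fin n, (Polynomial.X - Polynomial.C (a i)) with hf
  have hfne : f ≠ 0 := by
    apply mul_ne_zero (by simpa using hγ)
    exact Finset.prod_ne_zero_iff.2 fun i _ => X_sub_C_ne_zero _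
  have hιf : ι f ≠ 0 := fun h => hfne (hinj (by simpa using h))
  obtain ⟨p, q, hqmem, hspq⟩ := IsFractionRing.div_surjective (A := Polynomial F) s
  have hq : q ≠ 0 := nonZeroDivisors.ne_zero hqmem
  have hιq : ι q ≠ 0 := fun h => hq (hinj (by simpa using h))
  have hιp : ι p ≠ 0 := by
    intro h
    rw [← hspq, h, zero_div] at hs
    exact hs rfl
  have hp : p ≠ 0 := fun h => hιp (by rw [h, map_zero])
  -- key identity in K
  have hDs : D s = ((ι q)⁻¹) ^ 2 * (ι q * ι (derivative p) - ι p * ι (derivative q)) := by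
    rw [← hspq, Derivation.leibniz_div, smul_eq_mul, smul_eq_mul, smul_eq_mul,
      Dmap D hD, Dmap D hD, inv_pow]
  have h1 : D s = (ι f)⁻¹ * s := (div_eq_iff hs).1 heq.symm
  rw [hDs, ← hspq] at h1
  have hkeyK : ι p * ι q = ι f * (ι (derivative p) * ι q - ι p * ι (derivative q)) := by
    change _ = (ι f)⁻¹ * (ι p / ι q) at h1
    field_simp at h1
    have h2 : (ι p * ι q) * ι q
        = (ι f * (ι (derivative p) * ι q - ι p * ι (derivative q))) * ι q := by
      linear_combination -(ι q) * h1
    exact mul_right_cancel₀ hιq h2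
  have key : p * q = f * (derivative p * q - p * derivative q) := by
    apply hinj
    push_cast [map_mul, map_sub]
    linear_combination hkeyK
  -- n > 0
  have hn : 0 < n := by
    rcases Nat.eq_zero_or_pos n with h0 | h0
    · exfalso
      subst h0
      have hfC : f = Polynomial.C γ := by
        rw [hf]
        simp
      rw [hfC] at key
      set r : Polynomial F := derivative p * q - p * derivative q with hrr
      have hrne : r ≠ 0 := by
        intro h
        rw [h, mul_zero] at key
        exact mul_ne_zero hp hq key
      rcases Nat.eq_zero_or_pos (p.natDegree + q.natDegree) with hd0 | hd0
      · obtain ⟨c, hc⟩ := Polynomial.natDegree_eq_zero.1 (by omega : p.natDegree = 0)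
        obtain ⟨d, hdq⟩ := Polynomial.natDegree_eq_zero.1 (by omega : q.natDegree = 0)
        apply hrne
        rw [hrr, ← hc, ← hdq]
        simp
      · have hlt := deg_r_lt hp hq (by omega)
        rw [← hrr] at hlt
        have e1 : (p * q).natDegree = p.natDegree + q.natDegree := natDegree_mul hp hq
        rw [key, natDegree_C_mul hγ] at e1
        omega
    · exact h0
  -- local analysis
  have hloc := fun i => local_analysis γ hγ n a hp hq key i
  have hainj : Function.Injective a := by
    intro x y hxy
    by_contra hne
    have hsub : ({x, y} : Finset (Fin n)) ⊆ Finset.univ.filter (fun j => a j = a y) := by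
      intro j hj
      rcases Finset.mem_insert.1 hj with rfl | hj
      · simp [hxy]
      · rw [Finset.mem_singleton] at hj
        subst hj
        simp
    have h2 := Finset.card_le_card hsub
    rw [Finset.card_pair hne, (hloc y).1] at h2
    omega
  refine ⟨hn, hainj, fun i => ?_⟩
  have hfe : Finset.univ.filter (fun j => a j ≠ a i) = Finset.univ.erase i := by
    ext j
    simp only [Finset.mem_filter, Finset.mem_erase, Finset.mem_univ, and_true, true_and]
    constructor
    · exact fun h hji => h (by rw [hji])
    · exact fun h hc => h (hainj hc)
  have := (hloc i).2
  rwa [hfe] at this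

end Statement3Aux

/-- Let `F` be a field of characteristic zero, `γ ∈ Fˣ`, and
`f(t) = γ (t - a 1) ⋯ (t - a n) ∈ F[t]`.  Then `1/f = s'/s` for some nonzero `s ∈ F(t)` iff
`n > 0`, the `a i` are pairwise distinct, and each `γ⁻¹ ∏_{j ≠ i} (a i - a j)⁻¹` is an
integer in `F`. -/
theorem statement3 (F : Type) [Field F] [CharZero F]
    (D : Derivation F (FractionRing (Polynomial F)) (FractionRing (Polynomial F)))
    (hD : D (algebraMap (Polynomial F) (FractionRing (Polynomial F)) Polynomial.X) = 1)
    (γ : F) (hγ : γ ≠ 0) (n : ℕ) (a : Fin n → F) :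
    (∃ s : FractionRing (Polynomial F), s ≠ 0 ∧
        (algebraMap (Polynomial F) (FractionRing (Polynomial F))
            (Polynomial.C γ * ∏ i : Fin n, (Polynomial.X - Polynomial.C (a i))))⁻¹
          = D s / s) ↔
    (0 < n ∧ Function.Injective a ∧
      ∀ i : Fin n, ∃ z : ℤ,
        γ⁻¹ * (∏ j ∈ Finset.univ.erase i, (a i - a j))⁻¹ = (z : F)) := by
  constructor
  · rintro ⟨s, hs, heq⟩
    exact Statement3Aux.fwd_dir D hD γ hγ n a s hs heq
  · rintro ⟨hn, hainj, hz⟩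
    choose z hz using hz
    exact Statement3Aux.conv_dir D hD γ hγ n a hn hainj z hz

end
end

section
/- Let k be a field of characteristic zero and let z_1, z_2 be integers. There exists a discrete valuation ν on k(x,y) with the following properties: (1) ν(x) = z_1 and ν(y) = z_2; (2) if u = Σ_{l=1}^m λ_l x^{a_l} y^{b_l} ∈ k[x,y] for some λ_l ∈ k^× and distinct pairs (a_l,b_l) of nonnegative integers, then ν(u) = min{ a_l z_1 + b_l z_2 : 1 ≤ l ≤ m }; and (3) for every nonzero f ∈ k(x,y) and every integer w such that ν(f) ≥ z_1 + z_2 - w, the valuation ν is a w-valuation on the Poisson field K{f}. -/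
noncomputable section

open MvPolynomial

variable (k : Type) [Field k]

variable {k}

variable {K : Type} [Field K] [Algebra k K]

/-!
Let `ν(a)` be the order in `t` of the image of `a` under the embedding of `k(x,y)` into the Laurent
series field `k(x,y)((t))` given by `x ↦ t ^ z₁ • x`, `y ↦ t ^ z₂ • y`. As the pullback of the
`t`-adic valuation along a field embedding, `ν` is a discrete valuation. A monomial of weight
`a z₁ + b z₂` goes to that power of `t`, and distinct monomials do not cancel, so the value of a
polynomial is the least weight of its monomials.

A derivation `D` with `D x = 1`, `D y = 0` sends a monomial to a multiple of a monomial of weight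
lower by `z₁`, so `ν (D a) ≥ ν a - z₁` on monomials, hence on polynomials (`ν` is ultrametric) and
on quotients (`D (q⁻¹) = -q⁻² D q`). Together with the analogous bound for `∂/∂y` this gives
`ν {a, b} ≥ ν a + ν b - z₁ - z₂ + ν f ≥ ν a + ν b - w`.
-/

theorem HahnSeries.prod_single {Γ R ι : Type*} [AddCommMonoid Γ] [PartialOrder Γ]
    [IsOrderedCancelAddMonoid Γ] [CommSemiring R] (s : Finset ι) (a : ι → Γ) (r : ι → R) :
    ∏ i ∈ s, single (a i) (r i) = single (∑ i ∈ s, a i) (∏ i ∈ s, r i) := by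
  classical
  induction s using Finset.induction_on with
  | empty => simp [single_zero_one]
  | insert i s hi ih =>
    rw [Finset.prod_insert hi, ih, single_mul_single, Finset.sum_insert hi, Finset.prod_insert hi]

namespace AddValuation

variable (v : AddValuation K (WithTop ℤ)) (D : Derivation k K K) (c : ℤ)

def derivationBounded : Submonoid K where
  carrier := {a | v a ≤ v (D a) + c}
  one_mem' := by simp
  mul_mem' {a b} ha hb := by
    change v a ≤ v (D a) + c at ha
    change v b ≤ v (D b) + c at hb
    change v (a * b) ≤ v (D (a * b)) + c
    calc v (a * b) ≤ min (v (a * D b)) (v (b * D a)) + c := by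
          rw [← min_add_add_right, le_min_iff, map_mul, map_mul, map_mul, add_assoc, add_assoc]
          constructor
          · gcongr
          · rw [add_comm]; gcongr
      _ ≤ v (D (a * b)) + c := by
          rw [Derivation.leibniz, smul_eq_mul, smul_eq_mul]
          gcongr
          exact v.map_add _ _

variable {v D c}

theorem inv_mem_derivationBounded {a : K} (ha : a ∈ v.derivationBounded D c) :
    a⁻¹ ∈ v.derivationBounded D c := by
  rcases eq_or_ne a 0 with rfl | ha₀
  · simpa using ha
  change v a ≤ v (D a) + c at ha
  change v a⁻¹ ≤ v (D a⁻¹) + c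
  calc v a⁻¹ = v (a⁻¹ ^ 2) + v a := by
        rw [← map_mul, pow_two, mul_assoc, inv_mul_cancel₀ ha₀, mul_one]
    _ ≤ v (a⁻¹ ^ 2) + (v (D a) + c) := by gcongr
    _ = v (D a⁻¹) + c := by
        rw [Derivation.leibniz_inv, smul_eq_mul, map_mul, map_neg, add_assoc]

theorem le_map_sum_add {ι : Type*} (s : Finset ι) (f : ι → K) {g : WithTop ℤ}
    (h : ∀ i ∈ s, g ≤ v (f i) + c) : g ≤ v (∑ i ∈ s, f i) + c := by
  classical
  induction s using Finset.induction_on with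
  | empty => simp
  | insert i s hi ih =>
    rw [Finset.sum_insert hi]
    calc g ≤ min (v (f i)) (v (∑ j ∈ s, f j)) + c := by
          rw [← min_add_add_right]
          exact le_min (h i (by simp)) (ih fun j hj => h j (by simp [hj]))
      _ ≤ v (f i + ∑ j ∈ s, f j) + c := by gcongr; exact v.map_add _ _

def toDVal (v : AddValuation K (WithTop ℤ))
    (hv : ∀ c : k, c ≠ 0 → v (algebraMap k K c) = 0) : DVal k K where
  v := v
  top_iff _ := v.top_iff
  v_mul := v.map_mul
  min_le := v.map_add
  const := hv

theorem isWVal_pbr {v : AddValuation (Kxy k) (WithTop ℤ)}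
    (hv : ∀ c : k, c ≠ 0 → v (algebraMap k (Kxy k) c) = 0) {Dx Dy : Derivation k (Kxy k) (Kxy k)}
    {z₁ z₂ w : ℤ} (hx : ∀ a, v a ≤ v (Dx a) + z₁) (hy : ∀ a, v a ≤ v (Dy a) + z₂) {f : Kxy k}
    (hf : ((z₁ + z₂ - w : ℤ) : WithTop ℤ) ≤ v f) :
    (v.toDVal hv).IsWVal (pbr Dx Dy f) w := by
  intro a b
  change v a + v b ≤ v ((Dx a * Dy b - Dy a * Dx b) * f) + w
  have hbracket : v a + v b ≤ v (Dx a * Dy b - Dy a * Dx b) + (z₁ + z₂ : ℤ) := by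
    calc v a + v b ≤ min (v (Dx a * Dy b)) (v (Dy a * Dx b)) + (z₁ + z₂ : ℤ) := by
          rw [← min_add_add_right, le_min_iff, map_mul, map_mul, WithTop.coe_add]
          constructor
          · calc v a + v b ≤ (v (Dx a) + z₁) + (v (Dy b) + z₂) := add_le_add (hx a) (hy b)
              _ = _ := by ac_rfl
          · calc v a + v b ≤ (v (Dy a) + z₂) + (v (Dx b) + z₁) := add_le_add (hy a) (hx b)
              _ = _ := by ac_rfl
      _ ≤ _ := by gcongr; exact v.map_sub _ _
  have hzw : ((z₁ + z₂ : ℤ) : WithTop ℤ) ≤ v f + w := by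
    rw [← sub_add_cancel (z₁ + z₂) w, WithTop.coe_add]
    gcongr
  calc v a + v b ≤ v (Dx a * Dy b - Dy a * Dx b) + (v f + w) := hbracket.trans (by gcongr)
    _ = _ := by rw [map_mul, add_assoc]

end AddValuation

namespace MvPolynomial

variable {σ : Type} (w : σ → ℤ)

def torusSubst : MvPolynomial σ k →+* HahnSeries ℤ (FractionRing (MvPolynomial σ k)) :=
  eval₂Hom (HahnSeries.C.comp (algebraMap k _))
    fun i => HahnSeries.single (w i) (algebraMap (MvPolynomial σ k) _ (X i))

theorem torusSubst_monomial (s : σ →₀ ℕ) (c : k) :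
    torusSubst w (monomial s c) = HahnSeries.single (Finsupp.weight w s)
      (algebraMap (MvPolynomial σ k) (FractionRing (MvPolynomial σ k)) (monomial s c)) := by
  rw [torusSubst, eval₂Hom_monomial, monomial_eq, map_mul, map_finsuppProd, Finsupp.weight_apply]
  simp only [RingHom.comp_apply, HahnSeries.C_apply, HahnSeries.single_pow, map_pow, Finsupp.prod,
    Finsupp.sum, HahnSeries.prod_single, HahnSeries.single_mul_single, zero_add]
  rfl

theorem coeff_torusSubst (p : MvPolynomial σ k) (n : ℤ) :
    (torusSubst w p).coeff n = algebraMap (MvPolynomial σ k) (FractionRing (MvPolynomial σ k))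
      (weightedHomogeneousComponent w n p) := by
  classical
  conv_lhs => rw [p.as_sum]
  simp only [map_sum, torusSubst_monomial, HahnSeries.coeff_sum, HahnSeries.coeff_single,
    weightedHomogeneousComponent_apply, Finset.sum_filter, eq_comm (a := n)]
  simp only [apply_ite, map_zero]

theorem torusSubst_injective : Function.Injective (torusSubst (k := k) w) := by
  rw [injective_iff_map_eq_zero]
  intro p hp
  ext s
  have h := coeff_torusSubst w p (Finsupp.weight w s)
  rw [hp, HahnSeries.coeff_zero, eq_comm, map_eq_zero_iff _ (IsFractionRing.injective _ _)] at h
  classical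
  simpa [coeff_weightedHomogeneousComponent] using congrArg (coeff s) h

theorem coeff_torusSubst_ne_zero_iff (p : MvPolynomial σ k) (n : ℤ) :
    (torusSubst w p).coeff n ≠ 0 ↔ ∃ s ∈ p.support, Finsupp.weight w s = n := by
  classical
  rw [coeff_torusSubst, Ne, map_eq_zero_iff _ (IsFractionRing.injective _ _)]
  constructor
  · intro h
    by_contra! hn
    exact h (weightedHomogeneousComponent_eq_zero' n p hn)
  · rintro ⟨s, hs, rfl⟩ h
    have := congrArg (coeff s) h
    rw [coeff_weightedHomogeneousComponent, if_pos rfl, coeff_zero] at this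
    exact mem_support_iff.1 hs this

def weightValuation : AddValuation (FractionRing (MvPolynomial σ k)) (WithTop ℤ) :=
  (HahnSeries.addVal ℤ _).comap (IsFractionRing.lift (torusSubst_injective (k := k) w))

theorem weightValuation_algebraMap (p : MvPolynomial σ k) :
    weightValuation w (algebraMap (MvPolynomial σ k) (FractionRing (MvPolynomial σ k)) p) =
      p.support.inf fun s => (Finsupp.weight w s : WithTop ℤ) := by
  change HahnSeries.addVal ℤ _ (IsFractionRing.lift _ _) = _
  rw [IsFractionRing.lift_algebraMap]
  refine le_antisymm (Finset.le_inf fun s hs => ?_) ?_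
  · exact HahnSeries.addVal_le_of_coeff_ne_zero
      ((coeff_torusSubst_ne_zero_iff w p _).2 ⟨s, hs, rfl⟩)
  · rw [HahnSeries.addVal_apply, HahnSeries.le_orderTop_iff_forall]
    intro n hn
    by_contra h
    obtain ⟨s, hs, rfl⟩ := (coeff_torusSubst_ne_zero_iff w p n).1 h
    exact (Finset.inf_le (f := fun s => (Finsupp.weight w s : WithTop ℤ)) hs).not_gt hn

theorem weightValuation_monomial (s : σ →₀ ℕ) {c : k} (hc : c ≠ 0) :
    weightValuation w (algebraMap (MvPolynomial σ k) (FractionRing (MvPolynomial σ k))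
      (monomial s c)) = Finsupp.weight w s := by
  classical
  rw [weightValuation_algebraMap, support_monomial, if_neg hc, Finset.inf_singleton]

theorem weightValuation_X (i : σ) :
    weightValuation w (algebraMap (MvPolynomial σ k) (FractionRing (MvPolynomial σ k)) (X i)) =
      w i := by
  rw [X, weightValuation_monomial w _ one_ne_zero, Finsupp.weight_single, one_smul]

theorem weightValuation_algebraMap_base {c : k} (hc : c ≠ 0) :
    weightValuation w (algebraMap k (FractionRing (MvPolynomial σ k)) c) = 0 := by
  rw [IsScalarTower.algebraMap_apply k (MvPolynomial σ k), algebraMap_eq, C_apply,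
    weightValuation_monomial w _ hc, map_zero, WithTop.coe_zero]

theorem weightValuation_le_derivation_add (D : Derivation k (FractionRing (MvPolynomial σ k))
      (FractionRing (MvPolynomial σ k))) (c : ℤ)
    (hX : ∀ i, algebraMap (MvPolynomial σ k) _ (X i) ∈ (weightValuation w).derivationBounded D c)
    (a : FractionRing (MvPolynomial σ k)) :
    weightValuation w a ≤ weightValuation w (D a) + c := by
  set v := weightValuation (k := k) w
  have hmonomial (s : σ →₀ ℕ) (r : k) :
      algebraMap (MvPolynomial σ k) _ (monomial s r) ∈ v.derivationBounded D c := by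
    rw [monomial_eq, map_mul, map_finsuppProd, ← algebraMap_eq, ← IsScalarTower.algebraMap_apply]
    refine Submonoid.mul_mem _ ?_ (Submonoid.prod_mem _ fun i _ => ?_)
    · change v _ ≤ v (D _) + c
      simp
    · simpa only [map_pow] using Submonoid.pow_mem _ (hX i) _
  -- `derivationBounded` is not closed under addition: a polynomial is compared with its monomials.
  have hpoly (p : MvPolynomial σ k) :
      algebraMap (MvPolynomial σ k) _ p ∈ v.derivationBounded D c := by
    change v _ ≤ v (D _) + c
    conv_rhs => rw [p.as_sum, map_sum, map_sum]
    refine AddValuation.le_map_sum_add _ _ fun s hs => le_trans ?_ (hmonomial s (coeff s p))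
    rw [weightValuation_monomial w s (mem_support_iff.1 hs), weightValuation_algebraMap]
    exact Finset.inf_le hs
  obtain ⟨p, q, -, rfl⟩ := IsFractionRing.div_surjective (MvPolynomial σ k) a
  rw [div_eq_mul_inv]
  exact Submonoid.mul_mem _ (hpoly p) (AddValuation.inv_mem_derivationBounded (hpoly q))

theorem weightValuation_le_derivation_add_of_map_X [DecidableEq σ]
    {D : Derivation k (FractionRing (MvPolynomial σ k)) (FractionRing (MvPolynomial σ k))} {j : σ}
    (hD : ∀ i, D (algebraMap (MvPolynomial σ k) _ (X i)) =
      Pi.single (M := fun _ => FractionRing (MvPolynomial σ k)) j 1 i)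
    (a : FractionRing (MvPolynomial σ k)) :
    weightValuation w a ≤ weightValuation w (D a) + w j := by
  refine weightValuation_le_derivation_add w D (w j) (fun i => ?_) a
  change weightValuation w _ ≤ weightValuation w _ + w j
  rcases eq_or_ne i j with rfl | hij
  · simp [hD, weightValuation_X]
  · simp [hD, hij]

theorem support_sum_monomial [DecidableEq σ] {ι : Type*} (s : Finset ι) {e : ι → σ →₀ ℕ}
    (he : Set.InjOn e s) {c : ι → k} (hc : ∀ i ∈ s, c i ≠ 0) :
    (∑ i ∈ s, monomial (e i) (c i)).support = s.image e := by
  ext d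
  simp only [mem_support_iff, coeff_sum, coeff_monomial, Finset.mem_image]
  constructor
  · intro h
    by_contra! hd
    exact h (Finset.sum_eq_zero fun i hi => if_neg (hd i hi))
  · rintro ⟨i, hi, rfl⟩
    rw [Finset.sum_eq_single_of_mem i hi fun j hj hji => if_neg fun h => hji (he hj hi h),
      if_pos rfl]
    exact hc i hi

theorem weightValuation_sum_monomial {ι : Type*} (s : Finset ι) {e : ι → σ →₀ ℕ}
    (he : Set.InjOn e s) {c : ι → k} (hc : ∀ i ∈ s, c i ≠ 0) :
    weightValuation w (algebraMap (MvPolynomial σ k) (FractionRing (MvPolynomial σ k))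
      (∑ i ∈ s, monomial (e i) (c i))) = s.inf fun i => (Finsupp.weight w (e i) : WithTop ℤ) := by
  classical
  rw [weightValuation_algebraMap, support_sum_monomial s he hc, Finset.inf_image]
  rfl

theorem weightValuation_sum_C_mul_X_pow_mul_X_pow (z₁ z₂ : ℤ) {m : ℕ} {lam : Fin m → k}
    {e : Fin m → ℕ × ℕ} (hlam : ∀ l, lam l ≠ 0) (he : Function.Injective e) :
    weightValuation ![z₁, z₂] (algebraMap (MvPolynomial (Fin 2) k) (Kxy k)
        (∑ l : Fin m, C (lam l) * X 0 ^ (e l).1 * X 1 ^ (e l).2)) =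
      Finset.univ.inf fun l => ((((e l).1 : ℤ) * z₁ + ((e l).2 : ℤ) * z₂ : ℤ) : WithTop ℤ) := by
  set E : ℕ × ℕ → Fin 2 →₀ ℕ := fun ab => Finsupp.single 0 ab.1 + Finsupp.single 1 ab.2
  have hE : Function.Injective E := fun ab ab' h => by
    have h₀ := DFunLike.congr_fun h 0
    have h₁ := DFunLike.congr_fun h 1
    simp [E] at h₀ h₁
    exact Prod.ext h₀ h₁
  have hmonomial (l : Fin m) :
      C (lam l) * X 0 ^ (e l).1 * X 1 ^ (e l).2 = monomial (E (e l)) (lam l) := by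
    simp only [E, X_pow_eq_monomial, C_mul_monomial, monomial_mul, mul_one]
  simp only [hmonomial]
  rw [weightValuation_sum_monomial _ _ (e := fun l => E (e l)) (hE.comp he).injOn
    fun l _ => hlam l]
  simp [E, Finsupp.weight_single]

end MvPolynomial

theorem statement4_general (k : Type) [Field k]
    (Dx Dy : Derivation k (Kxy k) (Kxy k)) (hDx : IsDx Dx) (hDy : IsDy Dy)
    (z₁ z₂ : ℤ) :
    ∃ ν : DVal k (Kxy k),
      ν.v (Xe k) = (z₁ : WithTop ℤ) ∧ ν.v (Ye k) = (z₂ : WithTop ℤ) ∧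
      (∀ (m : ℕ) (lam : Fin m → k) (e : Fin m → ℕ × ℕ),
        (∀ l, lam l ≠ 0) → Function.Injective e →
        ν.v (algebraMap (MvPolynomial (Fin 2) k) (Kxy k)
            (∑ l : Fin m, C (lam l) * X 0 ^ (e l).1 * X 1 ^ (e l).2))
          = Finset.univ.inf (fun l : Fin m =>
              ((((e l).1 : ℤ) * z₁ + ((e l).2 : ℤ) * z₂ : ℤ) : WithTop ℤ))) ∧
      (∀ f : Kxy k, f ≠ 0 → ∀ w : ℤ,
        ((z₁ + z₂ - w : ℤ) : WithTop ℤ) ≤ ν.v f → ν.IsWVal (pbr Dx Dy f) w) := by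
  set v := weightValuation (k := k) ![z₁, z₂]
  have hv : ∀ c : k, c ≠ 0 → v (algebraMap k (Kxy k) c) = 0 := fun _ hc =>
    weightValuation_algebraMap_base _ hc
  have hx : ∀ a, v a ≤ v (Dx a) + z₁ := weightValuation_le_derivation_add_of_map_X _ (j := 0)
    (Fin.forall_fin_two.2 (by simpa [IsDx, Xe, Ye] using hDx))
  have hy : ∀ a, v a ≤ v (Dy a) + z₂ := weightValuation_le_derivation_add_of_map_X _ (j := 1)
    (Fin.forall_fin_two.2 (by simpa [IsDy, Xe, Ye] using hDy))
  exact ⟨v.toDVal hv, weightValuation_X _ 0, weightValuation_X _ 1,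
    fun m lam e hlam he => weightValuation_sum_C_mul_X_pow_mul_X_pow z₁ z₂ hlam he,
    fun f _ w hf => AddValuation.isWVal_pbr hv hx hy hf⟩

/-- For any integers `z₁, z₂` there is a discrete valuation `ν` on `k(x,y)`
with `ν(x) = z₁`, `ν(y) = z₂`, computing the value of a polynomial as the minimum of the
values of its monomials, and which is a `w`-valuation on `K{f}` whenever
`ν(f) ≥ z₁ + z₂ - w`. -/
theorem statement4 (k : Type) [Field k] [CharZero k]
    (Dx Dy : Derivation k (Kxy k) (Kxy k)) (hDx : IsDx Dx) (hDy : IsDy Dy)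
    (z₁ z₂ : ℤ) :
    ∃ ν : DVal k (Kxy k),
      ν.v (Xe k) = (z₁ : WithTop ℤ) ∧ ν.v (Ye k) = (z₂ : WithTop ℤ) ∧
      (∀ (m : ℕ) (lam : Fin m → k) (e : Fin m → ℕ × ℕ),
        (∀ l, lam l ≠ 0) → Function.Injective e →
        ν.v (algebraMap (MvPolynomial (Fin 2) k) (Kxy k)
            (∑ l : Fin m, C (lam l) * X 0 ^ (e l).1 * X 1 ^ (e l).2))
          = Finset.univ.inf (fun l : Fin m =>
              ((((e l).1 : ℤ) * z₁ + ((e l).2 : ℤ) * z₂ : ℤ) : WithTop ℤ))) ∧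
      (∀ f : Kxy k, f ≠ 0 → ∀ w : ℤ,
        ((z₁ + z₂ - w : ℤ) : WithTop ℤ) ≤ ν.v f → ν.IsWVal (pbr Dx Dy f) w) :=
  statement4_general k Dx Dy hDx hDy z₁ z₂
end
end

section
/- Let K be a Poisson field over a field k of characteristic zero, let h ∈ K \ k, and let f(t) = a_l t^l + a_{l+1} t^{l+1} + ··· + a_n t^n be a Laurent polynomial with integer exponents l ≤ n, coefficients a_i ∈ k, and a_l, a_n ≠ 0. Suppose u, v are nonzero elements of K with {u,v} = u·v·f(h), and let d be an integer with 0 ≤ d < n. Then ν(h) ≥ 0 for every nontrivial d-valuation ν on K; that is, h ∈ ^dΓ_0(K). -/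
noncomputable section

open MvPolynomial

variable (k : Type) [Field k]

variable {k}

variable {K : Type} [Field K] [Algebra k K]

/-!
If `ν h = m < 0`, the top term `a_n h^n` of `f(h)` has the strictly smallest value, so
`ν (f h) = n m`. Comparing values in `{u,v} = u v f(h)`, the `d`-valuation inequality
`ν u + ν v ≤ ν {u,v} + d` becomes `0 ≤ n m + d ≤ d - n < 0`.
-/

open Finset

theorem WithTop.coe_mul_eq_zsmul (i m : ℤ) : ((i * m : ℤ) : WithTop ℤ) = i • (m : WithTop ℤ) :=
  map_zsmul (WithTop.addHom : ℤ →+ WithTop ℤ) i m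

namespace AddValuation

variable {F Γ₀ : Type*} [Field F] [LinearOrderedAddCommGroupWithTop Γ₀]

theorem map_zpow (v : AddValuation F Γ₀) (x : F) (i : ℤ) : v (x ^ i) = i • v x := by
  rcases i with j | j
  · simp [map_pow]
  · simp [zpow_negSucc, map_inv, map_pow, negSucc_zsmul]

theorem map_sum_mul_zpow_of_neg (v : AddValuation F (WithTop ℤ)) {h : F} {m : ℤ}
    (hm : v h = m) (hm0 : m < 0) {l n : ℤ} (hln : l ≤ n) {c : ℤ → F}
    (hc : ∀ i, 0 ≤ v (c i)) (hcn : v (c n) = 0) :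
    v (∑ i ∈ Icc l n, c i * h ^ i) = (n * m : ℤ) := by
  have hterm : ∀ i, v (c i * h ^ i) = v (c i) + (i * m : ℤ) := fun i => by
    rw [map_mul, map_zpow, hm, WithTop.coe_mul_eq_zsmul]
  have hlead : v (c n * h ^ n) = (n * m : ℤ) := by rw [hterm, hcn, zero_add]
  have hrest : ((n * m : ℤ) : WithTop ℤ) < v (∑ i ∈ (Icc l n).erase n, c i * h ^ i) := by
    refine v.map_lt_sum WithTop.coe_ne_top fun i hi => ?_
    have hin : i < n := lt_of_le_of_ne (mem_Icc.1 (mem_of_mem_erase hi)).2 (ne_of_mem_erase hi)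
    calc ((n * m : ℤ) : WithTop ℤ) < (i * m : ℤ) := by
          exact_mod_cast mul_lt_mul_of_neg_right hin hm0
      _ ≤ v (c i) + (i * m : ℤ) := le_add_of_nonneg_left (hc i)
      _ = v (c i * h ^ i) := (hterm i).symm
  rw [← add_sum_erase _ _ (mem_Icc.2 ⟨hln, le_rfl⟩), map_add_eq_of_lt_left _ (hlead ▸ hrest),
    hlead]

end AddValuation

namespace DVal

def toAddValuation (ν : DVal k K) : AddValuation K (WithTop ℤ) :=
  AddValuation.of ν.v ((ν.top_iff 0).2 rfl) (by simpa using ν.const 1 one_ne_zero) ν.min_le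
    ν.v_mul

theorem zero_le_v_algebraMap (ν : DVal k K) (c : k) : 0 ≤ ν.v (algebraMap k K c) := by
  rcases eq_or_ne c 0 with rfl | hc
  · simp [(ν.top_iff 0).2 rfl]
  · exact (ν.const c hc).ge

theorem zero_le_v_of_br_eq_mul_laurent (ν : DVal k K) {B : K → K → K} {d : ℤ}
    (hw : ν.IsWVal B d) {h u v : K} (hu : u ≠ 0) (hv : v ≠ 0) {l n : ℤ} (hln : l ≤ n)
    {a : ℤ → k} (han : a n ≠ 0)
    (huv : B u v = u * v * ∑ i ∈ Icc l n, algebraMap k K (a i) * h ^ i)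
    (hd0 : 0 ≤ d) (hdn : d < n) :
    0 ≤ ν.v h := by
  by_contra! hneg
  obtain ⟨m, hm⟩ := WithTop.ne_top_iff_exists.1 (hneg.trans (WithTop.coe_lt_top _)).ne
  have hm0 : m < 0 := by exact_mod_cast hm ▸ hneg
  have hf : ν.v (∑ i ∈ Icc l n, algebraMap k K (a i) * h ^ i) = (n * m : ℤ) :=
    ν.toAddValuation.map_sum_mul_zpow_of_neg hm.symm hm0 hln (fun i => ν.zero_le_v_algebraMap _)
      (ν.const _ han)
  obtain ⟨p, hp⟩ := WithTop.ne_top_iff_exists.1 (mt (ν.top_iff u).1 hu)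
  obtain ⟨q, hq⟩ := WithTop.ne_top_iff_exists.1 (mt (ν.top_iff v).1 hv)
  have hwuv := hw u v
  rw [huv, ν.v_mul, ν.v_mul, hf, ← hp, ← hq] at hwuv
  have : p + q ≤ p + q + n * m + d := by exact_mod_cast hwuv
  nlinarith

end DVal

theorem mem_Gamma_of_forall {B : K → K → K} {w v : ℤ} {a : K}
    (H : ∀ ν : DVal k K, ν.Nontriv → ν.IsWVal B w → (v : WithTop ℤ) ≤ ν.v a) :
    a ∈ Gamma k K B w v := by
  unfold Gamma
  split_ifs
  exacts [H, Set.mem_univ a]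

theorem statement5_general (k K : Type) [Field k] [Field K] [Algebra k K]
    (B : PoissonBracket k K)
    (h : K)
    (l n : ℤ) (hln : l ≤ n) (a : ℤ → k) (han : a n ≠ 0)
    (u v : K) (hu : u ≠ 0) (hv : v ≠ 0)
    (huv : B.br u v = u * v * ∑ i ∈ Finset.Icc l n, algebraMap k K (a i) * h ^ i)
    (d : ℤ) (hd0 : 0 ≤ d) (hdn : d < n) :
    (∀ ν : DVal k K, ν.Nontriv → ν.IsWVal B.br d → (0 : WithTop ℤ) ≤ ν.v h) ∧
    h ∈ Gamma k K B.br d 0 := by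
  have key : ∀ ν : DVal k K, ν.Nontriv → ν.IsWVal B.br d → (0 : WithTop ℤ) ≤ ν.v h :=
    fun ν _ hw => ν.zero_le_v_of_br_eq_mul_laurent hw hu hv hln han huv hd0 hdn
  exact ⟨key, mem_Gamma_of_forall key⟩

/-- Let `K` be a Poisson field over `k`, `h ∈ K \ k`, and
`f(t) = a_l t^l + ⋯ + a_n t^n` a Laurent polynomial with `a_l, a_n ≠ 0`.  If
`{u,v} = u·v·f(h)` for some nonzero `u, v ∈ K` and `0 ≤ d < n`, then `ν(h) ≥ 0` for every
nontrivial `d`-valuation `ν` on `K`; that is, `h ∈ ^dΓ_0(K)`. -/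
theorem statement5 (k K : Type) [Field k] [CharZero k] [Field K] [Algebra k K]
    (B : PoissonBracket k K)
    (h : K) (hh : h ∉ Set.range (algebraMap k K))
    (l n : ℤ) (hln : l ≤ n) (a : ℤ → k) (hal : a l ≠ 0) (han : a n ≠ 0)
    (u v : K) (hu : u ≠ 0) (hv : v ≠ 0)
    (huv : B.br u v = u * v * ∑ i ∈ Finset.Icc l n, algebraMap k K (a i) * h ^ i)
    (d : ℤ) (hd0 : 0 ≤ d) (hdn : d < n) :
    (∀ ν : DVal k K, ν.Nontriv → ν.IsWVal B.br d → (0 : WithTop ℤ) ≤ ν.v h) ∧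
    h ∈ Gamma k K B.br d 0 :=
  statement5_general k K B h l n hln a han u v hu hv huv d hd0 hdn

end
end

section
/- Let k be a field of characteristic zero and let p, q ∈ k^×. There exists an injective Poisson morphism from K_p into K_q if and only if p = m·q for some integer m. -/
noncomputable section

open MvPolynomial

variable (k : Type) [Field k]

variable {k}

variable {K : Type} [Field K] [Algebra k K]

set_option maxHeartbeats 1000000
set_option synthInstance.maxHeartbeats 200000

namespace S12

/-- substitute `X i := 0` -/
def ev (i : Fin 2) : MvPolynomial (Fin 2) k →ₐ[k] MvPolynomial (Fin 2) k :=
  aeval (Function.update X i 0)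

@[simp] lemma ev_X_self (i : Fin 2) : ev (k := k) i (X i) = 0 := by simp [ev]

@[simp] lemma ev_X_ne (i j : Fin 2) (h : j ≠ i) : ev (k := k) i (X j) = X j := by
  simp [ev, Function.update_of_ne h]

@[simp] lemma ev_C (i : Fin 2) (a : k) : ev i (C a) = C a := by simp [ev]

lemma X_dvd_sub_ev (i : Fin 2) (F : MvPolynomial (Fin 2) k) : X i ∣ F - ev i F := by
  induction F using MvPolynomial.induction_on with
  | C a => simp
  | add p q hp hq =>
      have h : p + q - ev i (p + q) = (p - ev i p) + (q - ev i q) := by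
        rw [map_add]; ring
      rw [h]; exact dvd_add hp hq
  | mul_X p j hp =>
      rcases eq_or_ne j i with rfl | hne
      · rw [map_mul, ev_X_self, mul_zero, sub_zero]
        exact dvd_mul_left _ _
      · have h : p * X j - ev i (p * X j) = (p - ev i p) * X j := by
          rw [map_mul, ev_X_ne i j hne]; ring
        rw [h]; exact hp.mul_right _

lemma X_dvd_iff_ev (i : Fin 2) (F : MvPolynomial (Fin 2) k) : X i ∣ F ↔ ev i F = 0 := by
  constructor
  · rintro ⟨G, rfl⟩; rw [map_mul, ev_X_self, zero_mul]
  · intro h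
    have h2 := X_dvd_sub_ev i F
    rwa [h, sub_zero] at h2

lemma prime_X (i : Fin 2) : Prime (X i : MvPolynomial (Fin 2) k) := by
  refine ⟨X_ne_zero i, ?_, ?_⟩
  · intro h
    have h1 : (X i : MvPolynomial (Fin 2) k) ∣ 1 := h.dvd
    rw [X_dvd_iff_ev, map_one] at h1
    exact one_ne_zero h1
  · intro a b hab
    rw [X_dvd_iff_ev, map_mul] at hab
    rcases mul_eq_zero.mp hab with h | h
    · exact Or.inl ((X_dvd_iff_ev i a).mpr h)
    · exact Or.inr ((X_dvd_iff_ev i b).mpr h)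

lemma exists_factor (i : Fin 2) {F : MvPolynomial (Fin 2) k} (hF : F ≠ 0) :
    ∃ n G, ¬ X i ∣ G ∧ F = X i ^ n * G :=
  WfDvdMonoid.max_power_factor hF (prime_X i).irreducible

lemma ev_pderiv (i j : Fin 2) (h : j ≠ i) (F : MvPolynomial (Fin 2) k) :
    ev i (pderiv j F) = pderiv j (ev i F) := by
  induction F using MvPolynomial.induction_on with
  | C a => simp [pderiv_C]
  | add p q hp hq => simp [map_add, hp, hq]
  | mul_X p l hp =>
      rcases eq_or_ne l i with rfl | hne
      · simp [pderiv_mul, pderiv_X_of_ne (Ne.symm h)]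
      · rcases eq_or_ne l j with rfl | hlj
        · rw [pderiv_mul, pderiv_X_self, mul_one, map_add, map_mul, hp, ev_X_ne i l hne,
            map_mul, ev_X_ne i l hne, pderiv_mul, pderiv_X_self, mul_one]
        · rw [pderiv_mul, pderiv_X_of_ne hlj, mul_zero, add_zero, map_mul, hp, ev_X_ne i l hne,
            map_mul, ev_X_ne i l hne, pderiv_mul, pderiv_X_of_ne hlj, mul_zero, add_zero]

lemma X_mul_pderiv_pow (i : Fin 2) (n : ℕ) (F : MvPolynomial (Fin 2) k) :
    X i * pderiv i (X i ^ n * F) =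
      X i ^ n * (C (n : k) * F + X i * pderiv i F) := by
  rw [pderiv_mul, pderiv_pow, pderiv_X_self, map_natCast (C : k →+* MvPolynomial (Fin 2) k) n]
  cases n with
  | zero => simp
  | succ m => rw [Nat.succ_sub_one]; push_cast; ring

lemma pderiv_pow_other (i j : Fin 2) (h : j ≠ i) (n : ℕ) (F : MvPolynomial (Fin 2) k) :
    pderiv j (X i ^ n * F) = X i ^ n * pderiv j F := by
  rw [pderiv_mul, pderiv_pow, pderiv_X_of_ne (Ne.symm h)]
  ring



local notation "ι" => algebraMap (MvPolynomial (Fin 2) k) (Kxy k)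

lemma Xe_def : Xe k = ι (X 0) := rfl
lemma Ye_def : Ye k = ι (X 1) := rfl

lemma iota_C (a : k) : ι (C a) = algebraMap k (Kxy k) a := by
  rw [← MvPolynomial.algebraMap_eq, ← IsScalarTower.algebraMap_apply]

lemma iota_inj : Function.Injective (ι : MvPolynomial (Fin 2) k → Kxy k) :=
  IsFractionRing.injective _ _

lemma iota_ne_zero {F : MvPolynomial (Fin 2) k} (h : F ≠ 0) : ι F ≠ 0 := by
  intro h0
  exact h (iota_inj (by rw [h0, map_zero]))

lemma D_algebraMap (D : Derivation k (Kxy k) (Kxy k)) (F : MvPolynomial (Fin 2) k) :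
    D (ι F) = ι (pderiv 0 F) * D (Xe k) + ι (pderiv 1 F) * D (Ye k) := by
  induction F using MvPolynomial.induction_on with
  | C a =>
      rw [pderiv_C, pderiv_C, map_zero, zero_mul, zero_mul, add_zero, iota_C,
        Derivation.map_algebraMap]
  | add p q hp hq => simp only [map_add, hp, hq]; ring
  | mul_X p i hp =>
      rw [map_mul, D.leibniz, smul_eq_mul, smul_eq_mul, hp]
      obtain rfl | rfl : i = 0 ∨ i = 1 := by fin_cases i; exacts [Or.inl rfl, Or.inr rfl]
      · simp only [pderiv_mul, pderiv_X_self, pderiv_X_of_ne (show (0 : Fin 2) ≠ 1 by decide),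
          Xe_def, Ye_def, map_add, map_mul, mul_one, mul_zero, add_zero]
        ring
      · simp only [pderiv_mul, pderiv_X_self, pderiv_X_of_ne (show (1 : Fin 2) ≠ 0 by decide),
          Xe_def, Ye_def, map_add, map_mul, mul_one, mul_zero, add_zero]
        ring

variable {Dx Dy : Derivation k (Kxy k) (Kxy k)}

lemma Dx_algebraMap (hDx : IsDx Dx) (F : MvPolynomial (Fin 2) k) :
    Dx (ι F) = ι (pderiv 0 F) := by
  rw [D_algebraMap, hDx.1, hDx.2, mul_one, mul_zero, add_zero]

lemma Dy_algebraMap (hDy : IsDy Dy) (F : MvPolynomial (Fin 2) k) :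
    Dy (ι F) = ι (pderiv 1 F) := by
  rw [D_algebraMap, hDy.1, hDy.2, mul_one, mul_zero, zero_add]

lemma chain (hDx : IsDx Dx) (hDy : IsDy Dy) (φ : Kxy k →ₐ[k] Kxy k)
    (D : Derivation k (Kxy k) (Kxy k)) (z : Kxy k) :
    D (φ z) = φ (Dx z) * D (φ (Xe k)) + φ (Dy z) * D (φ (Ye k)) := by
  have hpoly : ∀ F : MvPolynomial (Fin 2) k, D (φ (ι F)) =
      φ (ι (pderiv 0 F)) * D (φ (Xe k)) + φ (ι (pderiv 1 F)) * D (φ (Ye k)) := by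
    intro F
    induction F using MvPolynomial.induction_on with
    | C a =>
        rw [pderiv_C, pderiv_C, map_zero, map_zero, zero_mul, zero_mul, add_zero, iota_C,
          AlgHom.commutes, Derivation.map_algebraMap]
    | add p q hp hq =>
        simp only [map_add, hp, hq]; ring
    | mul_X p i hp =>
        rw [map_mul, map_mul, D.leibniz, smul_eq_mul, smul_eq_mul, hp]
        obtain rfl | rfl : i = 0 ∨ i = 1 := by fin_cases i; exacts [Or.inl rfl, Or.inr rfl]
        · simp only [pderiv_mul, pderiv_X_self, pderiv_X_of_ne (show (0 : Fin 2) ≠ 1 by decide),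
            Xe_def, Ye_def, map_add, map_mul, mul_one, mul_zero, add_zero]
          ring
        · simp only [pderiv_mul, pderiv_X_self, pderiv_X_of_ne (show (1 : Fin 2) ≠ 0 by decide),
            Xe_def, Ye_def, map_add, map_mul, mul_one, mul_zero, add_zero]
          ring
  obtain ⟨P, Q, hQ, rfl⟩ := IsFractionRing.div_surjective (A := MvPolynomial (Fin 2) k) z
  have hQ0 : Q ≠ 0 := nonZeroDivisors.ne_zero hQ
  have hιQ : ι Q ≠ 0 := iota_ne_zero hQ0
  have hφinj : Function.Injective φ := RingHom.injective (φ : Kxy k →+* Kxy k)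
  have hφQ : φ (ι Q) ≠ 0 := fun h => hιQ (hφinj (by rw [h, map_zero]))
  set z := ι P / ι Q with hzdef
  have hz : z * ι Q = ι P := div_mul_cancel₀ _ hιQ
  have hDxz : Dx z * ι Q + z * ι (pderiv 0 Q) = ι (pderiv 0 P) := by
    have h := congrArg Dx hz
    rw [Dx.leibniz, smul_eq_mul, smul_eq_mul, Dx_algebraMap hDx, Dx_algebraMap hDx] at h
    linear_combination h
  have hDyz : Dy z * ι Q + z * ι (pderiv 1 Q) = ι (pderiv 1 P) := by
    have h := congrArg Dy hz
    rw [Dy.leibniz, smul_eq_mul, smul_eq_mul, Dy_algebraMap hDy, Dy_algebraMap hDy] at h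
    linear_combination h
  have h1 : φ z * φ (ι Q) = φ (ι P) := by rw [← map_mul, hz]
  have h2 := congrArg D h1
  rw [D.leibniz, smul_eq_mul, smul_eq_mul, hpoly P, hpoly Q] at h2
  have h3 := congrArg φ hDxz
  rw [map_add, map_mul, map_mul] at h3
  have h4 := congrArg φ hDyz
  rw [map_add, map_mul, map_mul] at h4
  have hmain : D (φ z) * φ (ι Q) =
      (φ (Dx z) * D (φ (Xe k)) + φ (Dy z) * D (φ (Ye k))) * φ (ι Q) := by
    linear_combination h2 - D (φ (Xe k)) * h3 - D (φ (Ye k)) * h4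
  exact mul_right_cancel₀ hφQ hmain


lemma isPoissonHom_of_gen (hDx : IsDx Dx) (hDy : IsDy Dy) (φ : Kxy k →ₐ[k] Kxy k)
    (p q : k)
    (h : φ (ι (C p * X 0 * X 1)) =
      (Dx (φ (Xe k)) * Dy (φ (Ye k)) - Dy (φ (Xe k)) * Dx (φ (Ye k))) * ι (C q * X 0 * X 1)) :
    IsPoissonHom (pbr Dx Dy (ι (C p * X 0 * X 1))) (pbr Dx Dy (ι (C q * X 0 * X 1))) φ := by
  intro a b
  unfold pbr
  rw [map_mul, map_sub, map_mul, map_mul, h,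
    chain hDx hDy φ Dx a, chain hDx hDy φ Dx b, chain hDx hDy φ Dy a, chain hDx hDy φ Dy b]
  ring

lemma aeval_monomial_injective (w : Fin 2 → (Fin 2 →₀ ℕ))
    (f : Fin 2 → MvPolynomial (Fin 2) k) (hfm : ∀ j, f j = monomial (w j) 1)
    (hinj : Function.Injective fun s : Fin 2 →₀ ℕ => s 0 • w 0 + s 1 • w 1) :
    Function.Injective (aeval (R := k) (S₁ := MvPolynomial (Fin 2) k) f) := by
  set e : (Fin 2 →₀ ℕ) → (Fin 2 →₀ ℕ) := fun s => s 0 • w 0 + s 1 • w 1 with he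
  have hmon : ∀ (s : Fin 2 →₀ ℕ) (a : k), aeval f (monomial s a) = monomial (e s) a := by
    intro s a
    rw [aeval_monomial, Finsupp.prod_fintype _ _ (fun i => pow_zero _), Fin.prod_univ_two,
      hfm 0, hfm 1, monomial_pow, monomial_pow, one_pow, one_pow, monomial_mul, mul_one,
      MvPolynomial.algebraMap_eq, C_mul_monomial, mul_one]
  rw [injective_iff_map_eq_zero]
  intro F hF
  by_contra hF0
  obtain ⟨s₀, hs₀⟩ := (support_nonempty (p := F)).mpr hF0  -- check name
  have hrep : aeval f F = F.support.sum fun s => monomial (e s) (coeff s F) := by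
    conv_lhs => rw [F.as_sum, map_sum]
    exact Finset.sum_congr rfl fun s _ => hmon s _
  rw [hrep] at hF
  have hc := congrArg (coeff (e s₀)) hF
  rw [coeff_sum, coeff_zero] at hc
  rw [Finset.sum_eq_single s₀ (fun s hs hne => ?_) (fun h => absurd hs₀ h)] at hc
  · rw [coeff_monomial, if_pos rfl] at hc
    exact mem_support_iff.mp hs₀ hc
  · rw [coeff_monomial, if_neg fun hee => hne (hinj hee)]

lemma lift_exists (f : Fin 2 → MvPolynomial (Fin 2) k)
    (hf : Function.Injective (aeval (R := k) (S₁ := MvPolynomial (Fin 2) k) f)) :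
    ∃ φ : Kxy k →ₐ[k] Kxy k, ∀ F, φ (ι F) = ι (aeval f F) := by
  have hg : Function.Injective
      ((IsScalarTower.toAlgHom k (MvPolynomial (Fin 2) k) (Kxy k)).comp (aeval f)) := by
    intro a b hab
    exact hf (iota_inj hab)
  refine ⟨IsFractionRing.liftAlgHom hg, fun F => ?_⟩
  rw [IsFractionRing.liftAlgHom_apply, IsFractionRing.lift_algebraMap]
  rfl


lemma build (hDx : IsDx Dx) (hDy : IsDy Dy) (p q : k) (f : Fin 2 → MvPolynomial (Fin 2) k)
    (hf : Function.Injective (aeval (R := k) (S₁ := MvPolynomial (Fin 2) k) f))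
    (hid : C p * (f 0 * f 1) =
      (pderiv 0 (f 0) * pderiv 1 (f 1) - pderiv 1 (f 0) * pderiv 0 (f 1)) *
        (C q * X 0 * X 1)) :
    ∃ φ : Kxy k →ₐ[k] Kxy k, Function.Injective φ ∧
      IsPoissonHom (pbr Dx Dy (ι (C p * X 0 * X 1))) (pbr Dx Dy (ι (C q * X 0 * X 1))) φ := by
  obtain ⟨φ, hφ⟩ := lift_exists f hf
  have hinj : Function.Injective φ := RingHom.injective (φ : Kxy k →+* Kxy k)
  refine ⟨φ, hinj, isPoissonHom_of_gen hDx hDy φ p q ?_⟩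
  have h0 : φ (Xe k) = ι (f 0) := by rw [Xe_def, hφ, aeval_X]
  have h1 : φ (Ye k) = ι (f 1) := by rw [Ye_def, hφ, aeval_X]
  rw [hφ, h0, h1, Dx_algebraMap hDx, Dy_algebraMap hDy, Dx_algebraMap hDx, Dy_algebraMap hDy,
    ← map_mul, ← map_mul, ← map_sub, ← map_mul]
  congr 1
  rw [map_mul, map_mul, aeval_C, aeval_X, aeval_X, MvPolynomial.algebraMap_eq, mul_assoc]
  exact hid

lemma aeval_pow_injective_A (n : ℕ) (hn : n ≠ 0) :
    Function.Injective (aeval (R := k) (S₁ := MvPolynomial (Fin 2) k) ![X 0 ^ n, X 1]) := by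
  apply aeval_monomial_injective ![Finsupp.single 0 n, Finsupp.single 1 1]
  · intro j
    obtain rfl | rfl : j = 0 ∨ j = 1 := by fin_cases j; exacts [Or.inl rfl, Or.inr rfl]
    · simp [X_pow_eq_monomial]
    · simp [← X_pow_eq_monomial]
  · intro s s' h
    have h0 := DFunLike.congr_fun h 0
    have h1 := DFunLike.congr_fun h 1
    simp only [Matrix.cons_val_zero, Matrix.cons_val_one, Matrix.head_cons, Finsupp.add_apply,
      Finsupp.smul_apply, Finsupp.single_eq_same,
      Finsupp.single_eq_of_ne (by decide : (0:Fin 2) ≠ 1),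
      Finsupp.single_eq_of_ne (by decide : (1:Fin 2) ≠ 0), smul_eq_mul, mul_zero, add_zero,
      zero_add, mul_one] at h0 h1
    ext i
    obtain rfl | rfl : i = 0 ∨ i = 1 := by fin_cases i; exacts [Or.inl rfl, Or.inr rfl]
    · exact Nat.eq_of_mul_eq_mul_right (Nat.pos_of_ne_zero hn) h0
    · exact h1

lemma aeval_pow_injective_B (n : ℕ) (hn : n ≠ 0) :
    Function.Injective (aeval (R := k) (S₁ := MvPolynomial (Fin 2) k) ![X 1, X 0 ^ n]) := by
  apply aeval_monomial_injective ![Finsupp.single 1 1, Finsupp.single 0 n]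
  · intro j
    obtain rfl | rfl : j = 0 ∨ j = 1 := by fin_cases j; exacts [Or.inl rfl, Or.inr rfl]
    · simp [← X_pow_eq_monomial]
    · simp [X_pow_eq_monomial]
  · intro s s' h
    have h0 := DFunLike.congr_fun h 0
    have h1 := DFunLike.congr_fun h 1
    simp only [Matrix.cons_val_zero, Matrix.cons_val_one, Matrix.head_cons, Finsupp.add_apply,
      Finsupp.smul_apply, Finsupp.single_eq_same,
      Finsupp.single_eq_of_ne (by decide : (0:Fin 2) ≠ 1),
      Finsupp.single_eq_of_ne (by decide : (1:Fin 2) ≠ 0), smul_eq_mul, mul_zero, add_zero,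
      zero_add, mul_one] at h0 h1
    ext i
    obtain rfl | rfl : i = 0 ∨ i = 1 := by fin_cases i; exacts [Or.inl rfl, Or.inr rfl]
    · exact h1
    · exact Nat.eq_of_mul_eq_mul_right (Nat.pos_of_ne_zero hn) h0

lemma reverse_dir (hDx : IsDx Dx) (hDy : IsDy Dy) (p q : k) (m : ℤ) (hm : m ≠ 0)
    (hpq : p = (m : k) * q) :
    ∃ φ : Kxy k →ₐ[k] Kxy k, Function.Injective φ ∧
      IsPoissonHom (pbr Dx Dy (ι (C p * X 0 * X 1))) (pbr Dx Dy (ι (C q * X 0 * X 1))) φ := by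
  rcases hm.lt_or_gt with hneg | hpos
  · -- m < 0 : use x ↦ y, y ↦ x^(n'+1) with n'+1 = (-m).toNat
    obtain ⟨n', hn'⟩ : ∃ n', (-m).toNat = n' + 1 :=
      ⟨(-m).toNat - 1, (Nat.succ_pred_eq_of_pos (by omega)).symm⟩
    have hnm : ((n' + 1 : ℕ) : k) = -(m : k) := by
      have h1 : ((n' + 1 : ℕ) : ℤ) = -m := by omega
      calc ((n' + 1 : ℕ) : k) = (((n' + 1 : ℕ) : ℤ) : k) := by push_cast; ring
        _ = ((-m : ℤ) : k) := by rw [h1]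
        _ = -(m : k) := by push_cast; ring
    apply build hDx hDy p q ![X 1, X 0 ^ (n' + 1)]
      (aeval_pow_injective_B (n' + 1) (Nat.succ_ne_zero n'))
    simp only [Matrix.cons_val_zero, Matrix.cons_val_one, Matrix.head_cons]
    simp only [pderiv_pow, pderiv_X_self,
      pderiv_X_of_ne (show (1 : Fin 2) ≠ 0 by decide),
      pderiv_X_of_ne (show (0 : Fin 2) ≠ 1 by decide)]
    have hp2 : p = -((n' + 1 : ℕ) : k) * q := by rw [hpq, hnm]; ring
    have hpC : C p = -((n' + 1 : ℕ) : MvPolynomial (Fin 2) k) * C q := by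
      rw [hp2, map_mul, map_neg, map_natCast]
    rw [hpC, Nat.add_sub_cancel]
    push_cast
    ring
  · -- m > 0 : use x ↦ x^(n'+1), y ↦ y
    obtain ⟨n', hn'⟩ : ∃ n', m.toNat = n' + 1 :=
      ⟨m.toNat - 1, (Nat.succ_pred_eq_of_pos (by omega)).symm⟩
    have hnm : ((n' + 1 : ℕ) : k) = (m : k) := by
      have h1 : ((n' + 1 : ℕ) : ℤ) = m := by omega
      calc ((n' + 1 : ℕ) : k) = (((n' + 1 : ℕ) : ℤ) : k) := by push_cast; ring
        _ = (m : k) := by rw [h1]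
    apply build hDx hDy p q ![X 0 ^ (n' + 1), X 1]
      (aeval_pow_injective_A (n' + 1) (Nat.succ_ne_zero n'))
    simp only [Matrix.cons_val_zero, Matrix.cons_val_one, Matrix.head_cons]
    simp only [pderiv_pow, pderiv_X_self,
      pderiv_X_of_ne (show (1 : Fin 2) ≠ 0 by decide),
      pderiv_X_of_ne (show (0 : Fin 2) ≠ 1 by decide)]
    have hp2 : p = ((n' + 1 : ℕ) : k) * q := by rw [hpq, ← hnm]
    have hpC : C p = ((n' + 1 : ℕ) : MvPolynomial (Fin 2) k) * C q := by
      rw [hp2, map_mul, map_natCast]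
    rw [hpC, Nat.add_sub_cancel]
    push_cast
    ring


lemma Eprime (hDx : IsDx Dx) (hDy : IsDy Dy) {p q : k} (P Q R S : MvPolynomial (Fin 2) k)
    {u v : Kxy k} (hup : u * ι Q = ι P) (hvp : v * ι S = ι R)
    (hE : ι (C p) * (u * v) =
      (Dx u * Dy v - Dy u * Dx v) * (ι (C q) * ι (X 0) * ι (X 1))) :
    C p * (P * R * Q * S) =
      C q * X 0 * X 1 *
        ((pderiv 0 P * Q - P * pderiv 0 Q) * (pderiv 1 R * S - R * pderiv 1 S) -
         (pderiv 1 P * Q - P * pderiv 1 Q) * (pderiv 0 R * S - R * pderiv 0 S)) := by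
  have hXu : ι (pderiv 0 P) = u * ι (pderiv 0 Q) + ι Q * Dx u := by
    have h := congrArg Dx hup
    rw [Dx.leibniz, smul_eq_mul, smul_eq_mul, Dx_algebraMap hDx, Dx_algebraMap hDx] at h
    linear_combination -h
  have hYu : ι (pderiv 1 P) = u * ι (pderiv 1 Q) + ι Q * Dy u := by
    have h := congrArg Dy hup
    rw [Dy.leibniz, smul_eq_mul, smul_eq_mul, Dy_algebraMap hDy, Dy_algebraMap hDy] at h
    linear_combination -h
  have hXv : ι (pderiv 0 R) = v * ι (pderiv 0 S) + ι S * Dx v := by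
    have h := congrArg Dx hvp
    rw [Dx.leibniz, smul_eq_mul, smul_eq_mul, Dx_algebraMap hDx, Dx_algebraMap hDx] at h
    linear_combination -h
  have hYv : ι (pderiv 1 R) = v * ι (pderiv 1 S) + ι S * Dy v := by
    have h := congrArg Dy hvp
    rw [Dy.leibniz, smul_eq_mul, smul_eq_mul, Dy_algebraMap hDy, Dy_algebraMap hDy] at h
    linear_combination -h
  apply iota_inj
  simp only [map_mul, map_sub]
  rw [hXu, hYu, hXv, hYv, ← hup, ← hvp]
  linear_combination (ι Q * ι Q * ι S * ι S) * hE

lemma forward_key (hDx : IsDx Dx) (hDy : IsDy Dy) {p q : k}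
    {u v : Kxy k} (hu : u ≠ 0) (hv : v ≠ 0)
    (hE : ι (C p) * (u * v) =
      (Dx u * Dy v - Dy u * Dx v) * (ι (C q) * ι (X 0) * ι (X 1))) :
    ∃ m : ℤ, p = (m : k) * q := by
  obtain ⟨P, Q, hQm, rfl⟩ := IsFractionRing.div_surjective (A := MvPolynomial (Fin 2) k) u
  obtain ⟨R, S, hSm, rfl⟩ := IsFractionRing.div_surjective (A := MvPolynomial (Fin 2) k) v
  have hQ0 : Q ≠ 0 := nonZeroDivisors.ne_zero hQm
  have hS0 : S ≠ 0 := nonZeroDivisors.ne_zero hSm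
  have hιQ : ι Q ≠ 0 := iota_ne_zero hQ0
  have hιS : ι S ≠ 0 := iota_ne_zero hS0
  have hP0 : P ≠ 0 := fun h => hu (by rw [h, map_zero, zero_div])
  have hR0 : R ≠ 0 := fun h => hv (by rw [h, map_zero, zero_div])
  have hE' := Eprime hDx hDy P Q R S (div_mul_cancel₀ _ hιQ) (div_mul_cancel₀ _ hιS) hE
  clear hE hu hv hιQ hιS
  obtain ⟨a, P0, hP0d, rfl⟩ := exists_factor 0 hP0
  obtain ⟨c, Q0, hQ0d, rfl⟩ := exists_factor 0 hQ0
  obtain ⟨b, R0, hR0d, rfl⟩ := exists_factor 0 hR0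
  obtain ⟨d, S0, hS0d, rfl⟩ := exists_factor 0 hS0
  have H1 := X_mul_pderiv_pow 0 a P0
  have H2 := X_mul_pderiv_pow 0 c Q0
  have H3 := X_mul_pderiv_pow 0 b R0
  have H4 := X_mul_pderiv_pow 0 d S0
  rw [pderiv_pow_other 0 1 (by decide) a P0, pderiv_pow_other 0 1 (by decide) c Q0,
    pderiv_pow_other 0 1 (by decide) b R0, pderiv_pow_other 0 1 (by decide) d S0] at hE'
  have h5 : (X 0 ^ a * X 0 ^ c * X 0 ^ b * X 0 ^ d * X 0) * (C p * (P0 * R0 * Q0 * S0)) =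
      (X 0 ^ a * X 0 ^ c * X 0 ^ b * X 0 ^ d * X 0) *
        (C q * X 1 *
          (((C (a : k) - C (c : k)) * (P0 * Q0) +
              X 0 * (pderiv 0 P0 * Q0 - P0 * pderiv 0 Q0)) *
             (pderiv 1 R0 * S0 - R0 * pderiv 1 S0) -
           (pderiv 1 P0 * Q0 - P0 * pderiv 1 Q0) *
             ((C (b : k) - C (d : k)) * (R0 * S0) +
              X 0 * (pderiv 0 R0 * S0 - R0 * pderiv 0 S0)))) := by
    linear_combination (X 0) * hE'
      + C q * X 1 * (X 0 ^ b * X 0 ^ d * X 0 * (pderiv 1 R0 * S0 - R0 * pderiv 1 S0)) *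
          ((X 0 ^ c * Q0) * H1 - (X 0 ^ a * P0) * H2)
      - C q * X 1 * (X 0 ^ a * X 0 ^ c * X 0 * (pderiv 1 P0 * Q0 - P0 * pderiv 1 Q0)) *
          ((X 0 ^ d * S0) * H3 - (X 0 ^ b * R0) * H4)
  have hXne : (X 0 ^ a * X 0 ^ c * X 0 ^ b * X 0 ^ d * X 0 : MvPolynomial (Fin 2) k) ≠ 0 :=
    mul_ne_zero (mul_ne_zero (mul_ne_zero (mul_ne_zero (pow_ne_zero _ (X_ne_zero _))
      (pow_ne_zero _ (X_ne_zero _))) (pow_ne_zero _ (X_ne_zero _)))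
      (pow_ne_zero _ (X_ne_zero _))) (X_ne_zero _)
  have E2 := mul_left_cancel₀ hXne h5
  clear h5 hE' H1 H2 H3 H4
  have E3 := congrArg (ev 0) E2
  simp only [map_mul, map_add, map_sub, ev_C, ev_X_self,
    ev_X_ne 0 1 (show (1 : Fin 2) ≠ 0 by decide),
    ev_pderiv 0 1 (show (1 : Fin 2) ≠ 0 by decide),
    zero_mul, mul_zero, add_zero, zero_add] at E3
  have hP1 : ev 0 P0 ≠ 0 := fun h => hP0d ((X_dvd_iff_ev 0 P0).mpr h)
  have hQ1 : ev 0 Q0 ≠ 0 := fun h => hQ0d ((X_dvd_iff_ev 0 Q0).mpr h)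
  have hR1 : ev 0 R0 ≠ 0 := fun h => hR0d ((X_dvd_iff_ev 0 R0).mpr h)
  have hS1 : ev 0 S0 ≠ 0 := fun h => hS0d ((X_dvd_iff_ev 0 S0).mpr h)
  obtain ⟨s, P2, hP2d, hP2⟩ := exists_factor 1 hP1
  obtain ⟨s', Q2, hQ2d, hQ2⟩ := exists_factor 1 hQ1
  obtain ⟨t, R2, hR2d, hR2⟩ := exists_factor 1 hR1
  obtain ⟨t', S2, hS2d, hS2⟩ := exists_factor 1 hS1
  rw [hP2, hQ2, hR2, hS2] at E3
  have G1 := X_mul_pderiv_pow 1 s P2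
  have G2 := X_mul_pderiv_pow 1 s' Q2
  have G3 := X_mul_pderiv_pow 1 t R2
  have G4 := X_mul_pderiv_pow 1 t' S2
  have h6 : (X 1 ^ s * X 1 ^ s' * X 1 ^ t * X 1 ^ t' * X 1) * (C p * (P2 * R2 * Q2 * S2)) =
      (X 1 ^ s * X 1 ^ s' * X 1 ^ t * X 1 ^ t' * X 1) *
        (C q * ((C (a : k) - C (c : k)) *
            ((C (t : k) - C (t' : k)) * (R2 * S2) +
              X 1 * (pderiv 1 R2 * S2 - R2 * pderiv 1 S2)) * (P2 * Q2) -
          (C (b : k) - C (d : k)) *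
            ((C (s : k) - C (s' : k)) * (P2 * Q2) +
              X 1 * (pderiv 1 P2 * Q2 - P2 * pderiv 1 Q2)) * (R2 * S2))) := by
    linear_combination (X 1) * E3
      + C q * X 1 * (C (a : k) - C (c : k)) * (X 1 ^ s * X 1 ^ s' * P2 * Q2) *
          ((X 1 ^ t' * S2) * G3 - (X 1 ^ t * R2) * G4)
      - C q * X 1 * (C (b : k) - C (d : k)) * (X 1 ^ t * X 1 ^ t' * R2 * S2) *
          ((X 1 ^ s' * Q2) * G1 - (X 1 ^ s * P2) * G2)
  have hX1ne : (X 1 ^ s * X 1 ^ s' * X 1 ^ t * X 1 ^ t' * X 1 : MvPolynomial (Fin 2) k) ≠ 0 :=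
    mul_ne_zero (mul_ne_zero (mul_ne_zero (mul_ne_zero (pow_ne_zero _ (X_ne_zero _))
      (pow_ne_zero _ (X_ne_zero _))) (pow_ne_zero _ (X_ne_zero _)))
      (pow_ne_zero _ (X_ne_zero _))) (X_ne_zero _)
  have E4 := mul_left_cancel₀ hX1ne h6
  clear h6 E3 G1 G2 G3 G4
  have E5 := congrArg (ev 1) E4
  simp only [map_mul, map_add, map_sub, ev_C, ev_X_self,
    zero_mul, mul_zero, add_zero, zero_add] at E5
  have hW : ev 1 P2 * ev 1 R2 * ev 1 Q2 * ev 1 S2 ≠ 0 :=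
    mul_ne_zero (mul_ne_zero (mul_ne_zero
      (fun h => hP2d ((X_dvd_iff_ev 1 P2).mpr h))
      (fun h => hR2d ((X_dvd_iff_ev 1 R2).mpr h)))
      (fun h => hQ2d ((X_dvd_iff_ev 1 Q2).mpr h)))
      (fun h => hS2d ((X_dvd_iff_ev 1 S2).mpr h))
  have hfin : (C p : MvPolynomial (Fin 2) k) = (C (a : k) - C (c : k)) * (C (t : k) - C (t' : k)) * C q -
      (C (b : k) - C (d : k)) * (C (s : k) - C (s' : k)) * C q := by
    apply mul_right_cancel₀ hW
    linear_combination E5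
  have hfin2 : (C p : MvPolynomial (Fin 2) k) = C ((((a : k) - (c : k)) * ((t : k) - (t' : k)) -
      ((b : k) - (d : k)) * ((s : k) - (s' : k))) * q) := by
    rw [hfin]
    simp only [map_mul, map_sub]
    ring
  have hp := MvPolynomial.C_injective (Fin 2) k hfin2
  refine ⟨((a : ℤ) - c) * ((t : ℤ) - t') - ((b : ℤ) - d) * ((s : ℤ) - s'), ?_⟩
  rw [hp]
  push_cast
  ring


end S12

/-- For `p, q ∈ kˣ`, there is an (injective) Poisson morphism
`K_p → K_q` iff `p = m·q` for some integer `m`. -/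
theorem statement12 (k : Type) [Field k] [CharZero k]
    (Dx Dy : Derivation k (Kxy k) (Kxy k)) (hDx : IsDx Dx) (hDy : IsDy Dy)
    (p q : k) (hp : p ≠ 0) (hq : q ≠ 0) :
    (∃ φ : Kxy k →ₐ[k] Kxy k, Function.Injective φ ∧
        IsPoissonHom
          (pbr Dx Dy (algebraMap (MvPolynomial (Fin 2) k) (Kxy k) (C p * X 0 * X 1)))
          (pbr Dx Dy (algebraMap (MvPolynomial (Fin 2) k) (Kxy k) (C q * X 0 * X 1)))
          φ) ↔
    (∃ m : ℤ, p = (m : k) * q) := by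
  constructor
  · rintro ⟨φ, hinj, hPH⟩
    have hu : φ (Xe k) ≠ 0 := fun h =>
      S12.iota_ne_zero (X_ne_zero 0) (hinj (h.trans (map_zero φ).symm))
    have hv : φ (Ye k) ≠ 0 := fun h =>
      S12.iota_ne_zero (X_ne_zero 1) (hinj (h.trans (map_zero φ).symm))
    have h1 := hPH (Xe k) (Ye k)
    unfold pbr at h1
    rw [hDx.1, hDy.2, hDy.1, hDx.2] at h1
    rw [show ((1 : Kxy k) * 1 - 0 * 0) *
        (algebraMap (MvPolynomial (Fin 2) k) (Kxy k) (C p * X 0 * X 1)) =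
        algebraMap (MvPolynomial (Fin 2) k) (Kxy k) (C p * X 0 * X 1) by ring] at h1
    simp only [map_mul] at h1
    rw [S12.iota_C p, AlgHom.commutes, ← S12.iota_C p, ← S12.Xe_def, ← S12.Ye_def] at h1
    exact S12.forward_key hDx hDy hu hv (by rw [← S12.Xe_def, ← S12.Ye_def]; linear_combination h1)
  · rintro ⟨m, hm⟩
    have hm0 : m ≠ 0 := by
      rintro rfl
      rw [Int.cast_zero, zero_mul] at hm
      exact hp hm
    exact S12.reverse_dir hDx hDy p q m hm0 hm

end
end
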